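/- arXiv:2507.04573 — 9 statements merged into one kernel-verified Lean document; each statement's English description precedes it below -/
import Mathlib

section
/- Let R be a commutative Noetherian ring and M an R-module. Then the following are equivalent: (i) M is weakly Laskerian, i.e., for every submodule L of M the set of associated primes Ass_R(M/L) is finite; (ii) there exists a finitely generated submodule N of M such that Supp_R(M/N) = Ass_R(M/N) and Supp_R(M/N) is a finite set; (iii) M is FSF, i.e., there exists a finitely generated submodule N of M such that Supp_R(M/N) is a finite set. -/
set_option linter.unusedSectionVars false

open Submodule

section Helpers

variable {R : Type*} [CommRing R] {X : Type*} [AddCommGroup X] [Module R X]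

lemma qann_mem (Y : Submodule R X) (x : X) (r : R) :
    r ∈ (R ∙ (Y.mkQ x)).annihilator ↔ r • x ∈ Y := by
  rw [Submodule.mem_annihilator_span_singleton, ← map_smul, Submodule.mkQ_apply,
    Submodule.Quotient.mk_eq_zero]

lemma assoc_iff' [IsNoetherianRing R] {I : Ideal R} :
    IsAssociatedPrime I X ↔ I.IsPrime ∧ ∃ x : X, I = (R ∙ x).annihilator := by
  rw [isAssociatedPrime_iff]
  have : ∀ x : X, (⊥ : Submodule R X).colon {x} = (R ∙ x).annihilator := by
    intro x; ext r
    rw [Submodule.mem_colon_singleton, Submodule.mem_bot, Submodule.mem_annihilator_span_singleton]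
  simp only [this]

lemma IsAssociatedPrime.mem_support' [IsNoetherianRing R] {p : Ideal R} (hp : IsAssociatedPrime p X) :
    (⟨p, hp.isPrime⟩ : PrimeSpectrum R) ∈ Module.support R X := by
  obtain ⟨x, hx⟩ := (assoc_iff'.mp hp).2
  exact Module.mem_support_iff_exists_annihilator.mpr ⟨x, hx.ge⟩

/-- Associated primes of `X` are associated to a submodule or the quotient. -/
lemma ass_subset_union [IsNoetherianRing R] (Y : Submodule R X) :
    associatedPrimes R X ⊆ associatedPrimes R Y ∪ associatedPrimes R (X ⧸ Y) := by
  rintro p hpa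
  obtain ⟨hp, x, hx⟩ := assoc_iff'.mp hpa
  by_cases hcase : ∃ r : R, r • x ∈ Y ∧ r • x ≠ 0
  · obtain ⟨r, hrY, hrne⟩ := hcase
    have hr : r ∉ p := fun h => hrne (by
      have := hx ▸ h
      rwa [Submodule.mem_annihilator_span_singleton] at this)
    left
    refine assoc_iff'.mpr ⟨hp, ⟨r • x, hrY⟩, ?_⟩
    ext s
    rw [Submodule.mem_annihilator_span_singleton]
    have : (s • (⟨r • x, hrY⟩ : Y) = 0) ↔ s • (r • x) = 0 := by
      constructor
      · intro h; exact congrArg Subtype.val h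
      · intro h; exact Subtype.ext h
    rw [this, smul_smul, ← Submodule.mem_annihilator_span_singleton x (s*r), ← hx]
    exact ⟨fun hs => Ideal.mul_mem_right _ _ hs, fun hs => (hp.mem_or_mem hs).resolve_right hr⟩
  · push_neg at hcase
    right
    refine assoc_iff'.mpr ⟨hp, Y.mkQ x, ?_⟩
    ext s
    rw [qann_mem]
    constructor
    · intro hs
      have := hx ▸ hs
      rw [Submodule.mem_annihilator_span_singleton] at this
      rw [this]; exact zero_mem Y
    · intro hs
      have : s • x = 0 := hcase s hs
      rw [hx, Submodule.mem_annihilator_span_singleton, this]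

end Helpers

section Noeth

variable {R : Type*} [CommRing R] [IsNoetherianRing R]
variable {X : Type*} [AddCommGroup X] [Module R X]

/-- Existence of an element whose annihilator is contained in `p` and maximal such. -/
lemma exists_max_ann (p : Ideal R) (h : ∃ z : X, (R ∙ z).annihilator ≤ p) :
    ∃ x : X, (R ∙ x).annihilator ≤ p ∧
      ∀ z : X, (R ∙ z).annihilator ≤ p → (R ∙ x).annihilator ≤ (R ∙ z).annihilator →
        (R ∙ z).annihilator = (R ∙ x).annihilator := by
  obtain ⟨z₀, hz₀⟩ := h
  obtain ⟨J, ⟨⟨x, rfl⟩, hJp⟩, hmax⟩ :=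
    set_has_maximal_iff_noetherian.mpr ‹IsNoetherianRing R›
      {J : Ideal R | (∃ z : X, J = (R ∙ z).annihilator) ∧ J ≤ p}
      ⟨(R ∙ z₀).annihilator, ⟨z₀, rfl⟩, hz₀⟩
  refine ⟨x, hJp, fun z hzp hle => ?_⟩
  by_contra hne
  exact hmax _ ⟨⟨z, rfl⟩, hzp⟩ (lt_of_le_of_ne hle (fun h => hne h.symm))

/-- key saturation property of a maximal annihilator below `p`. -/
lemma max_ann_sat {p : Ideal R} (hp : p.IsPrime) {x : X}
    (hxle : (R ∙ x).annihilator ≤ p)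
    (hmax : ∀ z : X, (R ∙ z).annihilator ≤ p → (R ∙ x).annihilator ≤ (R ∙ z).annihilator →
        (R ∙ z).annihilator = (R ∙ x).annihilator)
    {t : R} (ht : t ∉ p) : (R ∙ (t • x)).annihilator = (R ∙ x).annihilator := by
  have hle : (R ∙ (t • x)).annihilator ≤ p := by
    intro u hu
    rw [Submodule.mem_annihilator_span_singleton, smul_smul] at hu
    have : u * t ∈ (R ∙ x).annihilator := by
      rwa [Submodule.mem_annihilator_span_singleton]
    rcases hp.mem_or_mem (hxle this) with h | h
    · exact h
    · exact absurd h ht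
  refine hmax _ hle ?_
  intro s hs
  rw [Submodule.mem_annihilator_span_singleton] at hs ⊢
  rw [smul_comm, hs, smul_zero]

/-- quasi-primary property. -/
lemma max_ann_qp {p : Ideal R} (hp : p.IsPrime) {x : X}
    (hxle : (R ∙ x).annihilator ≤ p)
    (hmax : ∀ z : X, (R ∙ z).annihilator ≤ p → (R ∙ x).annihilator ≤ (R ∙ z).annihilator →
        (R ∙ z).annihilator = (R ∙ x).annihilator)
    {u a : R} (hua : u * a ∈ (R ∙ x).annihilator) (hu : u ∉ p) :
    a ∈ (R ∙ x).annihilator := by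
  have h1 := max_ann_sat hp hxle hmax hu
  rw [← h1, Submodule.mem_annihilator_span_singleton]
  rw [Submodule.mem_annihilator_span_singleton] at hua
  rw [smul_smul, mul_comm]
  exact hua

/-- the cyclic trick : `p` is associated to `X ⧸ p•(R∙x)` when `ann x ≤ p`. -/
lemma cyclic_trick {p : Ideal R} (hp : p.IsPrime) {x : X}
    (hxle : (R ∙ x).annihilator ≤ p) :
    IsAssociatedPrime p (X ⧸ (p • (R ∙ x))) := by
  refine assoc_iff'.mpr ⟨hp, (p • (R ∙ x)).mkQ x, ?_⟩
  ext r
  rw [qann_mem, Submodule.mem_smul_span_singleton]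
  constructor
  · intro hr
    exact ⟨r, hr, rfl⟩
  · rintro ⟨a, ha, hax⟩
    have : (r - a) • x = 0 := by rw [sub_smul, hax, sub_self]
    have : r - a ∈ (R ∙ x).annihilator := by
      rwa [Submodule.mem_annihilator_span_singleton]
    have := hxle this
    simpa using add_mem this ha

/-- Claim E : passing to `X ⧸ p•(R∙x)` preserves associated primes that are not `< p`. -/
lemma claimE {p : Ideal R} (hp : p.IsPrime) {x : X}
    (hxle : (R ∙ x).annihilator ≤ p)
    (hmax : ∀ z : X, (R ∙ z).annihilator ≤ p → (R ∙ x).annihilator ≤ (R ∙ z).annihilator →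
        (R ∙ z).annihilator = (R ∙ x).annihilator)
    {q : Ideal R} (hq : IsAssociatedPrime q X) (hlt : ¬ q < p) :
    IsAssociatedPrime q (X ⧸ (p • (R ∙ x))) := by
  obtain ⟨hqp, y, hy⟩ := assoc_iff'.mp hq
  refine assoc_iff'.mpr ⟨hqp, (p • (R ∙ x)).mkQ y, ?_⟩
  ext r
  rw [qann_mem]
  constructor
  · intro hr
    have : r • y = 0 := by
      have := hy ▸ hr; rwa [Submodule.mem_annihilator_span_singleton] at this
    rw [this]; exact zero_mem _
  · intro hr
    rw [Submodule.mem_smul_span_singleton] at hr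
    obtain ⟨a, hap, hax⟩ := hr
    by_contra hrq
    -- r • y = a • x ≠ 0
    have hry : r • y ≠ 0 := fun h => hrq (by rw [hy, Submodule.mem_annihilator_span_singleton]; exact h)
    have haxne : a • x ≠ 0 := hax ▸ hry
    have haI : a ∉ (R ∙ x).annihilator := fun h => haxne
      (by rwa [Submodule.mem_annihilator_span_singleton] at h)
    -- ann (a • x) = ann x
    have hannax_le : (R ∙ (a • x)).annihilator ≤ p := by
      intro s hs
      rw [Submodule.mem_annihilator_span_singleton, smul_smul] at hs
      have : s * a ∈ (R ∙ x).annihilator := by rwa [Submodule.mem_annihilator_span_singleton]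
      by_contra hsp
      exact haI (max_ann_qp hp hxle hmax this hsp)
    have hIsub : (R ∙ x).annihilator ≤ (R ∙ (a • x)).annihilator := by
      intro s hs
      rw [Submodule.mem_annihilator_span_singleton] at hs ⊢
      rw [smul_comm, hs, smul_zero]
    have hann_ax : (R ∙ (a • x)).annihilator = (R ∙ x).annihilator := hmax _ hannax_le hIsub
    -- ann (r • y) = q
    have hann_ry : (R ∙ (r • y)).annihilator = q := by
      ext s
      rw [Submodule.mem_annihilator_span_singleton, smul_smul]
      rw [show (s * r) • y = 0 ↔ s * r ∈ (R ∙ y).annihilator from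
        (Submodule.mem_annihilator_span_singleton y (s*r)).symm, ← hy]
      exact ⟨fun h => (hqp.mem_or_mem h).resolve_right hrq, fun h => Ideal.mul_mem_right _ _ h⟩
    have hqI : q = (R ∙ x).annihilator := by rw [← hann_ry, ← hann_ax, hax]
    -- then q ≤ p, and q ≠ p else a ∈ ann x
    have hqlep : q ≤ p := hqI ▸ hxle
    have hqnep : q ≠ p := by
      rintro rfl
      exact haI (hqI ▸ hap)
    exact hlt (lt_of_le_of_ne hqlep hqnep)

end Noeth

section LemB

universe u

variable {R : Type*} [CommRing R] [IsNoetherianRing R]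

lemma lemB (n : ℕ) : ∀ (X : Type u) [AddCommGroup X] [Module R X]
    (T : Set (PrimeSpectrum R)), T.Finite → T.ncard = n →
    (∀ q ∈ Module.support R X, q ∉ T → q.asIdeal ∈ associatedPrimes R X) →
    (∀ q ∈ Module.support R X, ∀ p ∈ T, q.asIdeal < p.asIdeal → q ∈ T) →
    ∃ Y : Submodule R X, Y.FG ∧
      PrimeSpectrum.asIdeal '' Module.support R (X ⧸ Y) = associatedPrimes R (X ⧸ Y) := by
  induction n with
  | zero =>
    intro X _ _ T hTf hT0 h1 _
    have hTe : T = ∅ := (Set.ncard_eq_zero hTf).mp hT0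
    subst hTe
    refine ⟨⊥, Submodule.fg_bot, ?_⟩
    have e : (X ⧸ (⊥ : Submodule R X)) ≃ₗ[R] X := Submodule.quotEquivOfEqBot _ rfl
    rw [LinearEquiv.support_eq e, LinearEquiv.AssociatedPrimes.eq e]
    apply subset_antisymm
    · rintro _ ⟨q, hq, rfl⟩
      exact h1 q hq (Set.notMem_empty q)
    · intro p hp
      exact ⟨⟨p, hp.isPrime⟩, hp.mem_support', rfl⟩
  | succ n IH =>
    intro X _ _ T hTf hTc h1 h2
    obtain ⟨p, hpT, hpmax⟩ := Set.Finite.exists_maximalFor PrimeSpectrum.asIdeal T hTf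
      (Set.nonempty_of_ncard_ne_zero (by omega))
    have hT'f : (T \ {p}).Finite := hTf.diff
    have hT'c : (T \ {p}).ncard = n := by
      rw [Set.ncard_diff_singleton_of_mem hpT, hTc]
      omega
    by_cases hps : p ∈ Module.support R X
    · -- main case
      obtain ⟨x, hxle, hmax⟩ := exists_max_ann p.asIdeal
        (Module.mem_support_iff_exists_annihilator.mp hps)
      set Y₁ : Submodule R X := p.asIdeal • (R ∙ x) with hY₁def
      have hY₁fg : Y₁.FG := by
        rw [hY₁def, Submodule.smul_eq_map₂]
        exact Submodule.FG.map₂ _ (IsNoetherian.noetherian _) (Submodule.fg_span_singleton x)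
      have hsub : Module.support R (X ⧸ Y₁) ⊆ Module.support R X :=
        Module.support_subset_of_surjective Y₁.mkQ (Submodule.mkQ_surjective _)
      have h1' : ∀ q ∈ Module.support R (X ⧸ Y₁), q ∉ T \ {p} →
          q.asIdeal ∈ associatedPrimes R (X ⧸ Y₁) := by
        intro q hq hqT'
        by_cases hqp : q = p
        · subst hqp
          exact cyclic_trick q.2 hxle
        · have hqT : q ∉ T := fun h => hqT' ⟨h, by simpa using hqp⟩
          have hqS : q ∈ Module.support R X := hsub hq
          have hqA : IsAssociatedPrime q.asIdeal X := h1 q hqS hqT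
          have hnlt : ¬ q.asIdeal < p.asIdeal := fun hlt => hqT (h2 q hqS p hpT hlt)
          exact claimE p.2 hxle hmax hqA hnlt
      have h2' : ∀ q ∈ Module.support R (X ⧸ Y₁), ∀ p' ∈ T \ {p},
          q.asIdeal < p'.asIdeal → q ∈ T \ {p} := by
        intro q hq p' hp' hlt
        have hqS : q ∈ Module.support R X := hsub hq
        refine ⟨h2 q hqS p' hp'.1 hlt, ?_⟩
        simp only [Set.mem_singleton_iff]
        rintro rfl
        exact absurd (hpmax hp'.1 hlt.le) (not_le_of_gt hlt)
      obtain ⟨Y', hY'fg, hY'⟩ := IH (X ⧸ Y₁) (T \ {p}) hT'f hT'c h1' h2'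
      have hle : Y₁ ≤ Y'.comap Y₁.mkQ := by
        intro z hz
        rw [Submodule.mem_comap, Submodule.mkQ_apply, (Submodule.Quotient.mk_eq_zero _).mpr hz]
        exact zero_mem _
      have hmapY : (Y'.comap Y₁.mkQ).map Y₁.mkQ = Y' :=
        Submodule.map_comap_eq_of_surjective (Submodule.mkQ_surjective _) _
      have hYfg : (Y'.comap Y₁.mkQ).FG := by
        apply Submodule.fg_of_fg_map_of_fg_inf_ker Y₁.mkQ
        · rw [hmapY]; exact hY'fg
        · rw [Submodule.ker_mkQ, inf_eq_right.mpr hle]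
          exact hY₁fg
      refine ⟨Y'.comap Y₁.mkQ, hYfg, ?_⟩
      have e : ((X ⧸ Y₁) ⧸ (Y'.comap Y₁.mkQ).map Y₁.mkQ) ≃ₗ[R] X ⧸ (Y'.comap Y₁.mkQ) :=
        Submodule.quotientQuotientEquivQuotient Y₁ (Y'.comap Y₁.mkQ) hle
      rw [← LinearEquiv.support_eq e, ← LinearEquiv.AssociatedPrimes.eq e, hmapY]
      exact hY'
    · -- p not in support : drop it
      apply IH X (T \ {p}) hT'f hT'c
      · intro q hq hqT'
        apply h1 q hq
        intro hqT
        rcases eq_or_ne q p with rfl | hne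
        · exact hps hq
        · exact hqT' ⟨hqT, by simpa using hne⟩
      · intro q hq p' hp' hlt
        refine ⟨h2 q hq p' hp'.1 hlt, ?_⟩
        simp only [Set.mem_singleton_iff]
        rintro rfl
        exact absurd (hpmax hp'.1 hlt.le) (not_le_of_gt hlt)

end LemB

section LemF

variable {R : Type*} [CommRing R] [IsNoetherianRing R]
variable {X : Type*} [AddCommGroup X] [Module R X]

lemma exists_ass_le_of_mem_support {q : PrimeSpectrum R} (hq : q ∈ Module.support R X) :
    ∃ p : Ideal R, IsAssociatedPrime p X ∧ p ≤ q.asIdeal := by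
  classical
  set S := q.asIdeal.primeCompl with hSdef
  let R' := Localization S
  haveI : IsNoetherianRing R' := IsLocalization.isNoetherianRing S R' ‹_›
  haveI : Nontrivial (LocalizedModule S X) := hq
  obtain ⟨p', hp'⟩ := associatedPrimes.nonempty R' (LocalizedModule S X)
  obtain ⟨hp'prime, x', hx'⟩ := assoc_iff'.mp hp'
  obtain ⟨z, s, rfl⟩ : ∃ z s, LocalizedModule.mk z s = x' := by
    induction x' using LocalizedModule.induction_on with
    | _ m s => exact ⟨m, s, rfl⟩
  set p : Ideal R := p'.comap (algebraMap R R') with hpdef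
  have hpprime : p.IsPrime := hp'prime.comap _
  have hpq : p ≤ q.asIdeal := by
    intro r hr
    by_contra hrq
    have hunit : IsUnit (algebraMap R R' r) := IsLocalization.map_units R' (⟨r, hrq⟩ : S)
    exact hp'prime.ne_top (p'.eq_top_of_isUnit_mem hr hunit)
  obtain ⟨G, hG⟩ : p.FG := IsNoetherian.noetherian p
  have hgen : ∀ g ∈ G, ∃ u : R, u ∈ S ∧ (u * g) • z = (0 : X) := by
    intro g hg
    have hgp : g ∈ p := hG ▸ Submodule.subset_span hg
    have h0 : (algebraMap R R' g) • (LocalizedModule.mk z s) = 0 := by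
      rw [Ideal.mem_comap, hx', Submodule.mem_annihilator_span_singleton] at hgp
      exact hgp
    rw [algebraMap_smul, LocalizedModule.smul'_mk,
      show (0 : LocalizedModule S X) = LocalizedModule.mk 0 s from (LocalizedModule.zero_mk s).symm,
      LocalizedModule.mk_eq] at h0
    obtain ⟨c, hc⟩ := h0
    refine ⟨(c : R) * (s : R), S.mul_mem c.2 s.2, ?_⟩
    have : c • s • g • z = (0 : X) := by simpa using hc
    rw [Submonoid.smul_def, Submonoid.smul_def, smul_smul, smul_smul] at this
    rwa [mul_assoc, mul_smul, ← smul_smul] at this ⊢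
  choose u hu1 hu2 using hgen
  set t : R := G.attach.prod (fun g => u g.1 g.2) with htdef
  have htS : t ∈ S := Submonoid.prod_mem _ (fun g _ => hu1 g.1 g.2)
  refine ⟨p, assoc_iff'.mpr ⟨hpprime, t • z, le_antisymm ?_ ?_⟩, hpq⟩
  · -- p ≤ ann (t • z)
    rw [← hG, Ideal.span_le]
    intro g hg
    rw [SetLike.mem_coe, Submodule.mem_annihilator_span_singleton, smul_smul]
    have hfac := Finset.mul_prod_erase G.attach (fun gg => u gg.1 gg.2)
      (Finset.mem_attach G ⟨g, hg⟩)
    have : g * t = (∏ x ∈ G.attach.erase ⟨g, hg⟩, u x.1 x.2) * (u g hg * g) := by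
      rw [htdef, ← hfac]; ring
    rw [this, mul_smul, hu2 g hg, smul_zero]
  · -- ann (t • z) ≤ p
    intro r hr
    rw [Submodule.mem_annihilator_span_singleton, smul_smul] at hr
    have h0 : LocalizedModule.mk ((r * t) • z) s = (0 : LocalizedModule S X) := by
      rw [hr, ← LocalizedModule.zero_mk s]
    have h1 : (algebraMap R R' (r * t)) • (LocalizedModule.mk z s) = 0 := by
      rw [algebraMap_smul, LocalizedModule.smul'_mk, h0]
    have hrt : r * t ∈ p := by
      rw [hpdef, Ideal.mem_comap, hx', Submodule.mem_annihilator_span_singleton]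
      exact h1
    have htp : t ∉ p := fun h => htS (hpq h)
    exact (hpprime.mem_or_mem hrt).resolve_right htp

end LemF

section AssFin

universe u

variable {R : Type*} [CommRing R] [IsNoetherianRing R]

lemma assPrimes_quotient_ideal_finite (I : Ideal R) :
    (associatedPrimes R (R ⧸ I)).Finite := by
  obtain ⟨s, hinf, hprim⟩ := Submodule.isLasker R R I
  apply Set.Finite.subset (s.finite_toSet.image Ideal.radical)
  rintro P hPmem
  obtain ⟨hP, w, hw⟩ := assoc_iff'.mp hPmem
  obtain ⟨r₀, rfl⟩ := Submodule.Quotient.mk_surjective I w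
  have hmk : (Submodule.Quotient.mk r₀ : R ⧸ I) = I.mkQ r₀ := rfl
  rw [hmk] at hw
  have hmemA : ∀ (J : Ideal R) (a : R), a ∈ (R ∙ (Submodule.mkQ J r₀)).annihilator ↔ a * r₀ ∈ J := by
    intro J a
    rw [qann_mem, smul_eq_mul]
  have key : ∃ J ∈ s, (R ∙ (Submodule.mkQ J r₀)).annihilator ≤ P := by
    apply hP.prod_le.mp
    refine le_trans Ideal.prod_le_inf ?_
    intro a ha
    rw [hw, hmemA, ← hinf]
    rw [Submodule.mem_finsetInf] at ha ⊢
    intro J hJ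
    exact (hmemA J a).mp (ha J hJ)
  obtain ⟨J, hJs, hJP⟩ := key
  have hPJ : P = (R ∙ (Submodule.mkQ J r₀)).annihilator := by
    refine le_antisymm ?_ hJP
    intro a ha
    rw [hw, hmemA] at ha
    rw [hmemA]
    exact (hinf ▸ Finset.inf_le hJs : I ≤ J) ha
  have hassoc : P ∈ associatedPrimes R (R ⧸ J) := assoc_iff'.mpr ⟨hP, J.mkQ r₀, hPJ⟩
  rw [associatedPrimes.eq_singleton_of_isPrimary (hprim hJs), Set.mem_singleton_iff] at hassoc
  exact ⟨J, hJs, hassoc.symm⟩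

lemma assPrimes_finite_of_fin_span (n : ℕ) : ∀ (X : Type u) [AddCommGroup X] [Module R X],
    (∃ f : Fin n → X, Submodule.span R (Set.range f) = ⊤) →
    (associatedPrimes R X).Finite := by
  induction n with
  | zero =>
    rintro X _ _ ⟨f, hf⟩
    rw [Set.range_eq_empty f, Submodule.span_empty] at hf
    haveI : Subsingleton X := by
      constructor
      intro a b
      have ha : a ∈ (⊤ : Submodule R X) := trivial
      have hb : b ∈ (⊤ : Submodule R X) := trivial
      rw [← hf, Submodule.mem_bot] at ha hb
      rw [ha, hb]
    rw [associatedPrimes.eq_empty_of_subsingleton]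
    exact Set.finite_empty
  | succ n IH =>
    rintro X _ _ ⟨f, hf⟩
    set Y : Submodule R X := R ∙ (f 0) with hYdef
    have hY : (associatedPrimes R Y).Finite := by
      apply Set.Finite.subset (assPrimes_quotient_ideal_finite (R ∙ f 0).annihilator)
      rintro P hPa
      obtain ⟨hP, y, hy⟩ := assoc_iff'.mp hPa
      obtain ⟨c, hc⟩ := Submodule.mem_span_singleton.mp y.2
      refine assoc_iff'.mpr ⟨hP, Submodule.mkQ _ c, ?_⟩
      ext a
      rw [qann_mem, smul_eq_mul, Submodule.mem_annihilator_span_singleton, hy,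
        Submodule.mem_annihilator_span_singleton]
      have : (a • y : Y) = 0 ↔ a • (y : X) = 0 := by
        constructor
        · intro h; exact congrArg Subtype.val h
        · intro h; exact Subtype.ext h
      rw [this, ← hc, smul_smul]
    have hquot : (associatedPrimes R (X ⧸ Y)).Finite := by
      apply IH (X ⧸ Y)
      refine ⟨fun i : Fin n => Y.mkQ (f i.succ), ?_⟩
      have h1 : Submodule.map Y.mkQ (Submodule.span R (Set.range f)) = ⊤ := by
        rw [hf, Submodule.map_top, Submodule.range_mkQ]
      rw [Fin.range_fin_succ, Submodule.span_insert, Submodule.map_sup] at h1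
      have h2 : Submodule.map Y.mkQ (R ∙ f 0) = ⊥ := by
        rw [eq_bot_iff]
        rintro _ ⟨v, hv, rfl⟩
        rw [Submodule.mem_bot, Submodule.mkQ_apply, Submodule.Quotient.mk_eq_zero]
        exact hv
      rw [h2, bot_sup_eq] at h1
      have h3 : Set.range (fun i : Fin n => Y.mkQ (f i.succ)) = Y.mkQ '' Set.range (Fin.tail f) := by
        rw [← Set.range_comp]; rfl
      rw [h3, Submodule.span_image, h1]
    exact ((hY.union hquot).subset (ass_subset_union Y))

lemma assPrimes_finite_of_fg {X : Type u} [AddCommGroup X] [Module R X]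
    (N : Submodule R X) (hN : N.FG) : (associatedPrimes R N).Finite := by
  haveI : Module.Finite R N := Module.Finite.iff_fg.mpr hN
  obtain ⟨n, f, hf⟩ := Module.Finite.exists_fin (R := R) (M := N)
  exact assPrimes_finite_of_fin_span n N ⟨f, hf⟩

end AssFin

section Assemble

variable {R : Type*} [CommRing R] [IsNoetherianRing R]
variable {M : Type*} [AddCommGroup M] [Module R M]

lemma three_to_one (N : Submodule R M) (hNfg : N.FG)
    (hfin : (Module.support R (M ⧸ N)).Finite) (L : Submodule R M) :
    (associatedPrimes R (M ⧸ L)).Finite := by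
  set N' := N.map L.mkQ with hN'def
  have h1 : (associatedPrimes R N').Finite := assPrimes_finite_of_fg _ (hNfg.map _)
  have h2 : (associatedPrimes R ((M ⧸ L) ⧸ N')).Finite := by
    rw [LinearEquiv.AssociatedPrimes.eq (Submodule.quotientQuotientEquivQuotientSup L N)]
    apply Set.Finite.subset (hfin.image PrimeSpectrum.asIdeal)
    intro P hP
    have hP' : IsAssociatedPrime P (M ⧸ (L ⊔ N)) := hP
    have hmem := hP'.mem_support'
    have hsub : Module.support R (M ⧸ (L ⊔ N)) ⊆ Module.support R (M ⧸ N) := by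
      apply Module.support_subset_of_surjective (Submodule.mapQ N (L ⊔ N) LinearMap.id le_sup_right)
      intro c
      obtain ⟨m, rfl⟩ := Submodule.Quotient.mk_surjective _ c
      exact ⟨Submodule.Quotient.mk m, by rw [Submodule.mapQ_apply]; rfl⟩
    exact ⟨_, hsub hmem, rfl⟩
  exact (h1.union h2).subset (ass_subset_union N')

lemma three_to_two (N : Submodule R M) (hNfg : N.FG)
    (hfin : (Module.support R (M ⧸ N)).Finite) :
    ∃ N' : Submodule R M, N'.FG ∧
      PrimeSpectrum.asIdeal '' Module.support R (M ⧸ N') = associatedPrimes R (M ⧸ N') ∧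
      (Module.support R (M ⧸ N')).Finite := by
  obtain ⟨Y, hYfg, hY⟩ := lemB (Module.support R (M ⧸ N)).ncard (M ⧸ N)
    (Module.support R (M ⧸ N)) hfin rfl (fun q hq hq' => absurd hq hq')
    (fun q hq _ _ _ => hq)
  have hle : N ≤ Y.comap N.mkQ := by
    intro z hz
    rw [Submodule.mem_comap, Submodule.mkQ_apply, (Submodule.Quotient.mk_eq_zero _).mpr hz]
    exact zero_mem _
  have hmapY : (Y.comap N.mkQ).map N.mkQ = Y :=
    Submodule.map_comap_eq_of_surjective (Submodule.mkQ_surjective _) _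
  have hYfg' : (Y.comap N.mkQ).FG := by
    apply Submodule.fg_of_fg_map_of_fg_inf_ker N.mkQ
    · rw [hmapY]; exact hYfg
    · rw [Submodule.ker_mkQ, inf_eq_right.mpr hle]
      exact hNfg
  have e : ((M ⧸ N) ⧸ (Y.comap N.mkQ).map N.mkQ) ≃ₗ[R] M ⧸ (Y.comap N.mkQ) :=
    Submodule.quotientQuotientEquivQuotient N (Y.comap N.mkQ) hle
  refine ⟨Y.comap N.mkQ, hYfg', ?_, ?_⟩
  · rw [← LinearEquiv.support_eq e, ← LinearEquiv.AssociatedPrimes.eq e, hmapY]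
    exact hY
  · rw [← LinearEquiv.support_eq e, hmapY]
    exact hfin.subset (Module.support_subset_of_surjective Y.mkQ (Submodule.mkQ_surjective _))

end Assemble

section HardA

variable {R M : Type*}

/-- Auxiliary state for the recursive construction in the proof that weakly
Laskerian modules are FSF. -/
structure WLState (R M : Type*) [CommRing R] [AddCommGroup M] [Module R M] where
  N : Submodule R M
  fg : N.FG
  l : List (M × Ideal R)
  inv : ∀ pr ∈ l, (pr.2 : Ideal R).IsPrime ∧
    {q : PrimeSpectrum R | pr.2 ≤ q.asIdeal}.Finite ∧
    ∀ r : R, r • pr.1 ∈ N ↔ r ∈ pr.2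
  nodup : (l.map Prod.snd).Nodup

variable [CommRing R] [IsNoetherianRing R] [AddCommGroup M] [Module R M]

lemma exists_ass_Vinfinite
    (h1 : ∀ L : Submodule R M, (associatedPrimes R (M ⧸ L)).Finite)
    {N : Submodule R M} (hinf : (Module.support R (M ⧸ N)).Infinite) :
    ∃ P : Ideal R, IsAssociatedPrime P (M ⧸ N) ∧
      {q : PrimeSpectrum R | P ≤ q.asIdeal}.Infinite := by
  by_contra hc
  push_neg at hc
  apply hinf
  have hcov : Module.support R (M ⧸ N) ⊆
      ⋃ P ∈ associatedPrimes R (M ⧸ N), {q : PrimeSpectrum R | P ≤ q.asIdeal} := by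
    intro q hq
    obtain ⟨p, hp, hpq⟩ := exists_ass_le_of_mem_support hq
    exact Set.mem_biUnion hp hpq
  apply Set.Finite.subset _ hcov
  apply Set.Finite.biUnion (h1 N)
  intro P hP
  exact hc P hP

lemma pool_lemma {P : Ideal R} (hP : P.IsPrime)
    (hinf : {q : PrimeSpectrum R | P ≤ q.asIdeal}.Infinite) (F : Finset (Ideal R)) :
    ∃ m : PrimeSpectrum R, P ≤ m.asIdeal ∧
      {q : PrimeSpectrum R | m.asIdeal ≤ q.asIdeal}.Finite ∧ m.asIdeal ∉ F := by
  obtain ⟨Jst, ⟨hJprime, hPJ, hJinf⟩, hJmax⟩ :=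
    set_has_maximal_iff_noetherian.mpr ‹IsNoetherianRing R›
      {J : Ideal R | J.IsPrime ∧ P ≤ J ∧ {q : PrimeSpectrum R | J ≤ q.asIdeal}.Infinite}
      ⟨P, hP, le_rfl, hinf⟩
  have hai : Function.Injective (PrimeSpectrum.asIdeal (R := R)) := by
    intro a b h
    cases a; cases b; simpa using h
  have hbig : ({q : PrimeSpectrum R | Jst ≤ q.asIdeal} \
      (PrimeSpectrum.asIdeal ⁻¹' (insert Jst (↑F : Set (Ideal R))))).Infinite := by
    apply hJinf.diff
    exact Set.Finite.preimage hai.injOn (Set.Finite.insert _ F.finite_toSet)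
  obtain ⟨m, hm1, hm2⟩ := hbig.nonempty
  simp only [Set.mem_preimage, Set.mem_insert_iff, not_or] at hm2
  refine ⟨m, le_trans hPJ hm1, ?_, fun h => hm2.2 h⟩
  by_contra hVm
  rw [← Set.not_infinite, not_not] at hVm
  have hlt : Jst < m.asIdeal :=
    lt_of_le_of_ne hm1 (fun h => hm2.1 h.symm)
  exact hJmax m.asIdeal ⟨m.2, le_trans hPJ hm1, hVm⟩ hlt

lemma step_lemma (h1 : ∀ L : Submodule R M, (associatedPrimes R (M ⧸ L)).Finite)
    (hbad : ∀ N : Submodule R M, N.FG → (Module.support R (M ⧸ N)).Infinite)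
    (s : WLState R M) :
    ∃ s' : WLState R M, s.N ≤ s'.N ∧ ∃ x m, s'.l = (x, m) :: s.l := by
  classical
  obtain ⟨P, hP, hPinf⟩ := exists_ass_Vinfinite h1 (hbad s.N s.fg)
  obtain ⟨hPprime, w, hw⟩ := assoc_iff'.mp hP
  obtain ⟨x, rfl⟩ := Submodule.Quotient.mk_surjective s.N w
  have hx : ∀ r : R, r • x ∈ s.N ↔ r ∈ P := by
    intro r
    rw [hw]
    exact (qann_mem s.N x r).symm
  obtain ⟨m, hPm, hmfin, hmF⟩ := pool_lemma hPprime hPinf (s.l.map Prod.snd).toFinset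
  refine ⟨⟨s.N ⊔ (m.asIdeal • (R ∙ x)),
    s.fg.sup (by
      rw [Submodule.smul_eq_map₂]
      exact Submodule.FG.map₂ _ (IsNoetherian.noetherian _) (Submodule.fg_span_singleton x)),
    (x, m.asIdeal) :: s.l, ?_, ?_⟩, le_sup_left, x, m.asIdeal, rfl⟩
  · rintro pr hpr
    rcases List.mem_cons.mp hpr with rfl | hpr
    · refine ⟨m.2, hmfin, fun r => ⟨fun hr => ?_, fun hr => ?_⟩⟩
      · obtain ⟨n, hn, z, hz, hnz⟩ := Submodule.mem_sup.mp hr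
        obtain ⟨a, ha, haz⟩ := Submodule.mem_smul_span_singleton.mp hz
        have hsubN : (r - a) • x ∈ s.N := by
          have : (r - a) • x = n := by rw [sub_smul, ← hnz, haz]; abel
          rw [this]; exact hn
        have h2 := (hx _).mp hsubN
        have h3 : r = (r - a) + a := by ring
        rw [h3]
        exact add_mem (hPm h2) ha
      · exact Submodule.mem_sup_right
          (Submodule.smul_mem_smul hr (Submodule.mem_span_singleton_self x))
    · obtain ⟨hprime_i, hfin_i, hiff_i⟩ := s.inv pr hpr
      refine ⟨hprime_i, hfin_i, fun r => ⟨fun hr => ?_, fun hr =>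
        Submodule.mem_sup_left ((hiff_i r).mpr hr)⟩⟩
      by_contra hrp
      obtain ⟨n, hn, z, hz, hnz⟩ := Submodule.mem_sup.mp hr
      obtain ⟨a, ha, haz⟩ := Submodule.mem_smul_span_singleton.mp hz
      by_cases hax : a • x ∈ s.N
      · apply hrp
        apply (hiff_i r).mp
        rw [← hnz]
        exact add_mem hn (haz ▸ hax)
      · have haP : a ∉ P := fun h => hax ((hx a).mpr h)
        have hePQ : pr.2 = P := by
          ext t
          have e1 : t ∈ pr.2 ↔ (t * r) • pr.1 ∈ s.N := by
            rw [hiff_i]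
            exact ⟨fun h => Ideal.mul_mem_right _ _ h,
              fun h => (hprime_i.mem_or_mem h).resolve_right hrp⟩
          have e2 : (t * r) • pr.1 = t • n + (t * a) • x := by
            rw [mul_smul, ← hnz, smul_add, ← haz, smul_smul]
          have e4 : t • n + (t * a) • x ∈ s.N ↔ (t * a) • x ∈ s.N := by
            constructor
            · intro h
              have := sub_mem h (Submodule.smul_mem _ t hn)
              simpa using this
            · intro h
              exact add_mem (Submodule.smul_mem _ t hn) h
          rw [e1, e2, e4, hx]
          exact ⟨fun h => (hPprime.mem_or_mem h).resolve_right haP,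
            fun h => Ideal.mul_mem_right _ _ h⟩
        rw [hePQ] at hfin_i
        exact hPinf hfin_i
  · simp only [List.map_cons, List.nodup_cons]
    exact ⟨fun h => hmF (List.mem_toFinset.mpr h), s.nodup⟩

lemma one_to_three (h1 : ∀ L : Submodule R M, (associatedPrimes R (M ⧸ L)).Finite) :
    ∃ N : Submodule R M, N.FG ∧ (Module.support R (M ⧸ N)).Finite := by
  by_contra hc
  push_neg at hc
  have hbad : ∀ N : Submodule R M, N.FG → (Module.support R (M ⧸ N)).Infinite :=
    fun N h => hc N h
  let f : ℕ → WLState R M := fun n => Nat.rec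
    ⟨⊥, Submodule.fg_bot, [], fun pr h => absurd h (List.not_mem_nil (a := pr)), List.nodup_nil⟩
    (fun _ s => Classical.choose (step_lemma h1 hbad s)) n
  have hstep : ∀ k, (f k).N ≤ (f (k+1)).N ∧ ∃ x m, (f (k+1)).l = (x, m) :: (f k).l :=
    fun k => Classical.choose_spec (step_lemma h1 hbad (f k))
  choose hmono xs ms hcons using hstep
  have hNmono : Monotone fun k => (f k).N := monotone_nat_of_le_succ hmono
  have hmem : ∀ k j, k < j → (xs k, ms k) ∈ (f j).l := by
    intro k j hkj
    induction j with
    | zero => omega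
    | succ j IH =>
      rw [hcons j]
      rcases Nat.lt_succ_iff_lt_or_eq.mp hkj with h | h
      · exact List.mem_cons_of_mem _ (IH h)
      · subst h; exact List.mem_cons_self
  have hne : ∀ k j, k < j → ms k ≠ ms j := by
    intro k j hkj heq
    have h2 := (f (j+1)).nodup
    rw [hcons j] at h2
    simp only [List.map_cons, List.nodup_cons] at h2
    exact h2.1 (heq ▸ List.mem_map_of_mem (f := Prod.snd) (hmem k j hkj))
  have hinj : Function.Injective ms := by
    intro a b hab
    rcases lt_trichotomy a b with h | h | h
    · exact absurd hab (hne a b h)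
    · exact h
    · exact absurd hab.symm (hne b a h)
  set L : Submodule R M := ⨆ k, (f k).N with hLdef
  have hmemL : ∀ y, y ∈ L ↔ ∃ k, y ∈ (f k).N := fun y =>
    Submodule.mem_iSup_of_chain ⟨fun k => (f k).N, hNmono⟩ y
  have hassoc : ∀ k, ms k ∈ associatedPrimes R (M ⧸ L) := by
    intro k
    obtain ⟨hprime, hfin, hann⟩ := (f (k+1)).inv (xs k, ms k) (hmem k (k+1) (by omega))
    refine assoc_iff'.mpr ⟨hprime, L.mkQ (xs k), ?_⟩
    ext r
    rw [qann_mem, hmemL]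
    constructor
    · intro hr
      exact ⟨k+1, (hann r).mpr hr⟩
    · rintro ⟨j, hj⟩
      have hj' : r • xs k ∈ (f (max (k+1) j)).N := hNmono (le_max_right _ _) hj
      obtain ⟨_, _, ha'⟩ := (f (max (k+1) j)).inv (xs k, ms k)
        (hmem k _ (lt_of_lt_of_le (Nat.lt_succ_self k) (le_max_left _ _)))
      exact (ha' r).mp hj'
  exact Set.infinite_of_injective_forall_mem hinj hassoc (h1 L)

end HardA

/-- Let `R` be a commutative Noetherian ring and `M` an `R`-module. TFAE:
(i) `M` is weakly Laskerian: `Ass_R(M/L)` is finite for every submodule `L`;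
(ii) there is a finitely generated submodule `N` with `Supp_R(M/N) = Ass_R(M/N)`
and `Supp_R(M/N)` finite;
(iii) `M` is FSF: there is a finitely generated submodule `N` with `Supp_R(M/N)` finite. -/
theorem weaklyLaskerian_tfae {R : Type*} [CommRing R] [IsNoetherianRing R]
    {M : Type*} [AddCommGroup M] [Module R M] :
    List.TFAE
      [∀ L : Submodule R M, (associatedPrimes R (M ⧸ L)).Finite,
       ∃ N : Submodule R M, N.FG ∧
          PrimeSpectrum.asIdeal '' Module.support R (M ⧸ N) = associatedPrimes R (M ⧸ N) ∧
          (Module.support R (M ⧸ N)).Finite,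
       ∃ N : Submodule R M, N.FG ∧ (Module.support R (M ⧸ N)).Finite] := by
  tfae_have 1 → 3 := fun h1 => one_to_three h1
  tfae_have 3 → 2 := fun ⟨N, hfg, hfin⟩ => three_to_two N hfg hfin
  tfae_have 2 → 3 := fun ⟨N, hfg, _, hfin⟩ => ⟨N, hfg, hfin⟩
  tfae_have 3 → 1 := fun ⟨N, hfg, hfin⟩ L => three_to_one N hfg hfin L
  tfae_finish
end

section
/- Let R be a commutative Noetherian ring and M a weakly Laskerian R-module (i.e., Ass_R(M/L) is finite for every submodule L of M). Then M is an FSF module, i.e., there exists a finitely generated submodule N of M such that Supp_R(M/N) is a finite set. -/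
open Submodule

section WLAux

variable {R : Type*} [CommRing R] {M : Type*} [AddCommGroup M] [Module R M]

/-- The "colon" ideal `(L : x) = {r | r • x ∈ L}`, realized as the annihilator of the image of
`x` in `M ⧸ L`. -/
def wlCo (L : Submodule R M) (x : M) : Ideal R :=
  (R ∙ (Submodule.Quotient.mk x : M ⧸ L)).annihilator

lemma mem_wlCo {L : Submodule R M} {x : M} {r : R} : r ∈ wlCo L x ↔ r • x ∈ L := by
  rw [wlCo, Submodule.mem_annihilator_span_singleton, ← Submodule.Quotient.mk_smul,
    Submodule.Quotient.mk_eq_zero]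

lemma wlCo_mono {L L' : Submodule R M} (h : L ≤ L') (x : M) : wlCo L x ≤ wlCo L' x := by
  intro r hr
  rw [mem_wlCo] at hr ⊢
  exact h hr

lemma mem_support_iff_wlCo {L : Submodule R M} {p : PrimeSpectrum R} :
    p ∈ Module.support R (M ⧸ L) ↔ ∃ x : M, wlCo L x ≤ p.asIdeal := by
  rw [Module.mem_support_iff_exists_annihilator]
  constructor
  · rintro ⟨m, hm⟩
    obtain ⟨x, rfl⟩ := Submodule.Quotient.mk_surjective L m
    exact ⟨x, hm⟩
  · rintro ⟨x, hx⟩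
    exact ⟨Submodule.Quotient.mk x, hx⟩

lemma mem_associatedPrimes_iff_wlCo [IsNoetherianRing R] {L : Submodule R M} {P : Ideal R} :
    P ∈ associatedPrimes R (M ⧸ L) ↔ P.IsPrime ∧ ∃ x : M, P = wlCo L x := by
  have key : ∀ x : M, (⊥ : Submodule R (M ⧸ L)).colon {Submodule.Quotient.mk x} = wlCo L x := by
    intro x; ext r
    rw [mem_wlCo, Submodule.mem_colon_singleton, Submodule.mem_bot, ← Submodule.Quotient.mk_smul,
      Submodule.Quotient.mk_eq_zero]
  rw [AssociatedPrimes.mem_iff, isAssociatedPrime_iff]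
  constructor
  · rintro ⟨hP, m, hm⟩
    obtain ⟨x, rfl⟩ := Submodule.Quotient.mk_surjective L m
    exact ⟨hP, x, hm.trans (key x)⟩
  · rintro ⟨hP, x, hx⟩
    exact ⟨hP, Submodule.Quotient.mk x, hx.trans (key x).symm⟩

lemma supp_antitone {L L' : Submodule R M} (h : L ≤ L') :
    Module.support R (M ⧸ L') ⊆ Module.support R (M ⧸ L) := by
  intro p hp
  rw [mem_support_iff_wlCo] at hp ⊢
  obtain ⟨x, hx⟩ := hp
  exact ⟨x, (wlCo_mono h x).trans hx⟩

/-- In a Noetherian ring, below any prime `q` containing some colon ideal `(L : x)` there is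
an associated prime of `M ⧸ L` (an ideal of the form `(L : y)` which is prime) containing
`(L : x)` and contained in `q`. -/
lemma exists_assoc_le [IsNoetherianRing R] (L : Submodule R M) {q : Ideal R} (hq : q.IsPrime)
    {x : M} (hx : wlCo L x ≤ q) :
    ∃ P : Ideal R, P.IsPrime ∧ (∃ y : M, P = wlCo L y) ∧ wlCo L x ≤ P ∧ P ≤ q := by
  obtain ⟨P, ⟨⟨y, hy⟩, hxP, hPq⟩, hmax⟩ :=
    set_has_maximal_iff_noetherian.mpr (inferInstance : IsNoetherian R R)
      {P : Ideal R | (∃ y : M, P = wlCo L y) ∧ wlCo L x ≤ P ∧ P ≤ q}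
      ⟨wlCo L x, ⟨x, rfl⟩, le_rfl, hx⟩
  refine ⟨P, ⟨?_, ?_⟩, ⟨y, hy⟩, hxP, hPq⟩
  · exact fun hPtop => hq.ne_top (top_le_iff.mp (hPtop ▸ hPq))
  · intro a b hab
    by_cases hb : b ∈ P
    · exact Or.inr hb
    refine Or.inl ?_
    have hPA1 : P ≤ wlCo L (b • y) := by
      intro t ht
      rw [hy, mem_wlCo] at ht
      rw [mem_wlCo, smul_comm]
      exact L.smul_mem b ht
    have haA1 : a ∈ wlCo L (b • y) := by
      rw [mem_wlCo, smul_smul]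
      rw [hy, mem_wlCo] at hab
      exact hab
    by_cases hA1q : wlCo L (b • y) ≤ q
    · have hne : P = wlCo L (b • y) := by
        by_contra hne
        exact hmax _ ⟨⟨b • y, rfl⟩, hxP.trans hPA1, hA1q⟩ (lt_of_le_of_ne hPA1 hne)
      rw [hne]
      exact haA1
    · exfalso
      obtain ⟨s, hsA1, hsq⟩ := SetLike.not_le_iff_exists.mp hA1q
      have hPA2 : P ≤ wlCo L (s • y) := by
        intro t ht
        rw [hy, mem_wlCo] at ht
        rw [mem_wlCo, smul_comm]
        exact L.smul_mem s ht
      have hA2q : wlCo L (s • y) ≤ q := by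
        intro t ht
        rw [mem_wlCo, smul_smul] at ht
        have hts : t * s ∈ P := by
          rw [hy, mem_wlCo]
          exact ht
        rcases hq.mem_or_mem (hPq hts) with h | h
        · exact h
        · exact absurd h hsq
      have hne : P = wlCo L (s • y) := by
        by_contra hne
        exact hmax _ ⟨⟨s • y, rfl⟩, hxP.trans hPA2, hA2q⟩ (lt_of_le_of_ne hPA2 hne)
      apply hb
      rw [hne, mem_wlCo, smul_comm]
      rw [mem_wlCo] at hsA1
      exact hsA1

lemma sInf_le_prime_aux {S : Set (Ideal R)} (hS : S.Finite) {q : Ideal R} (hq : q.IsPrime) :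
    sInf S ≤ q → ∃ P ∈ S, P ≤ q := by
  refine Set.Finite.induction_on (motive := fun S _ => sInf S ≤ q → ∃ P ∈ S, P ≤ q) S hS ?_ ?_
  · intro h
    rw [sInf_empty] at h
    exact absurd (top_le_iff.mp h) hq.ne_top
  · intro a s _ _ ih h
    rw [sInf_insert] at h
    rcases (Ideal.IsPrime.inf_le hq).mp h with h' | h'
    · exact ⟨a, Set.mem_insert _ _, h'⟩
    · obtain ⟨P, hP, hPq⟩ := ih h'
      exact ⟨P, Set.mem_insert_of_mem _ hP, hPq⟩

/-- Dependent-choice recursion along `ℕ` with an invariant and a step relation. -/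
lemma wl_nat_rec_choice {σ : Type*} (P : ℕ → σ → Prop) (Q : ℕ → σ → σ → Prop) (s₀ : σ)
    (h₀ : P 0 s₀) (hstep : ∀ k s, P k s → ∃ s', P (k + 1) s' ∧ Q k s s') :
    ∃ f : ℕ → σ, ∀ k, P k (f k) ∧ Q k (f k) (f (k + 1)) := by
  choose! g hg1 hg2 using hstep
  refine ⟨fun k => Nat.rec s₀ (fun k s => g k s) k, ?_⟩
  have hP : ∀ k, P k (Nat.rec s₀ (fun k s => g k s) k) := by
    intro k
    induction k with
    | zero => exact h₀
    | succ k ih => exact hg1 k _ ih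
  exact fun k => ⟨hP k, hg2 k _ (hP k)⟩

end WLAux

/-- Let `R` be a commutative Noetherian ring and `M` a weakly Laskerian `R`-module
(i.e. `Ass_R(M/L)` is finite for every submodule `L` of `M`). Then `M` is an FSF module:
there exists a finitely generated submodule `N` of `M` with `Supp_R(M/N)` finite. -/
theorem weaklyLaskerian_isFSF
    {R : Type*} [CommRing R] [IsNoetherianRing R]
    {M : Type*} [AddCommGroup M] [Module R M]
    (hwl : ∀ L : Submodule R M, (associatedPrimes R (M ⧸ L)).Finite) :
    ∃ N : Submodule R M, N.FG ∧ (Module.support R (M ⧸ N)).Finite := by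
  classical
  by_contra hcon
  push_neg at hcon
  -- choose a f.g. `N₀` maximizing `sInf (Ass (M ⧸ N₀))`, so that supports of quotients by
  -- bigger f.g. submodules stabilize
  obtain ⟨I₀, ⟨N₀, hN₀fg, hI₀⟩, hImax⟩ :=
    set_has_maximal_iff_noetherian.mpr (inferInstance : IsNoetherian R R)
      {I : Ideal R | ∃ N : Submodule R M, N.FG ∧ I = sInf (associatedPrimes R (M ⧸ N))}
      ⟨sInf (associatedPrimes R (M ⧸ (⊥ : Submodule R M))), ⟨⊥, Submodule.fg_bot, rfl⟩⟩
  set Z := Module.support R (M ⧸ N₀) with hZdef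
  set A₀ := associatedPrimes R (M ⧸ N₀) with hA₀def
  have hA₀fin : A₀.Finite := hwl N₀
  have hZinf : Z.Infinite := hcon N₀ hN₀fg
  -- every point of the support of `M ⧸ L` contains an associated prime of `M ⧸ L`
  have hsuppA : ∀ (L : Submodule R M) (q : PrimeSpectrum R), q ∈ Module.support R (M ⧸ L) →
      ∃ P ∈ associatedPrimes R (M ⧸ L), P ≤ q.asIdeal := by
    intro L q hq
    obtain ⟨x, hx⟩ := mem_support_iff_wlCo.mp hq
    obtain ⟨P, hP1, hP2, _, hP4⟩ := exists_assoc_le L q.isPrime hx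
    exact ⟨P, mem_associatedPrimes_iff_wlCo.mpr ⟨hP1, hP2⟩, hP4⟩
  -- associated primes lie in the support
  have hassZ : ∀ (L : Submodule R M) (P : Ideal R), P ∈ associatedPrimes R (M ⧸ L) →
      ∀ hP : P.IsPrime, (⟨P, hP⟩ : PrimeSpectrum R) ∈ Module.support R (M ⧸ L) := by
    intro L P hP hPp
    obtain ⟨_, x, h2⟩ := mem_associatedPrimes_iff_wlCo.mp hP
    exact mem_support_iff_wlCo.mpr ⟨x, le_of_eq h2.symm⟩
  -- stability of the support
  have hsupp_eq : ∀ N : Submodule R M, N.FG → N₀ ≤ N → Module.support R (M ⧸ N) = Z := by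
    intro N hNfg hle
    have hIle : I₀ ≤ sInf (associatedPrimes R (M ⧸ N)) := by
      refine le_sInf fun P hP => ?_
      have hprime : Ideal.IsPrime P := (AssociatedPrimes.mem_iff.mp hP).isPrime
      have hPZ : (⟨P, hprime⟩ : PrimeSpectrum R) ∈ Z :=
        supp_antitone hle (hassZ N P hP hprime)
      obtain ⟨P₀, hP₀A, hP₀le⟩ := hsuppA N₀ ⟨P, hprime⟩ hPZ
      calc I₀ = sInf A₀ := hI₀
        _ ≤ P₀ := sInf_le hP₀A
        _ ≤ P := hP₀le
    have hIeq : sInf (associatedPrimes R (M ⧸ N)) = I₀ := by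
      by_contra hne
      exact hImax _ ⟨N, hNfg, rfl⟩ (lt_of_le_of_ne hIle (Ne.symm hne))
    apply Set.Subset.antisymm
    · exact supp_antitone hle
    · intro q hqZ
      obtain ⟨P₀, hP₀A, hP₀le⟩ := hsuppA N₀ q hqZ
      have hsle : sInf (associatedPrimes R (M ⧸ N)) ≤ q.asIdeal := by
        rw [hIeq, hI₀]
        exact (sInf_le hP₀A).trans hP₀le
      obtain ⟨P, hPA, hPle⟩ := sInf_le_prime_aux (hwl N) q.isPrime hsle
      obtain ⟨hp, x, hx⟩ := mem_associatedPrimes_iff_wlCo.mp hPA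
      refine mem_support_iff_wlCo.mpr ⟨x, ?_⟩
      rw [← hx]
      exact hPle
  have hZA : ∀ q ∈ Z, ∃ P ∈ A₀, P ≤ q.asIdeal := fun q hq => hsuppA N₀ q hq
  -- the key step of the recursive construction
  have keystep : ∀ L : Submodule R M, L.FG → N₀ ≤ L → ∀ B : Set (Ideal R), B.Finite →
      ∃ (L' : Submodule R M) (xn : M) (qn : Ideal R),
        L'.FG ∧ L ≤ L' ∧ qn.IsPrime ∧ qn ∉ B ∧ (∃ w ∈ Z, w.asIdeal < qn) ∧
        wlCo L' xn = qn ∧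
        (∀ (x : M) (q : Ideal R), wlCo L x = q → (∃ w ∈ Z, w.asIdeal < q) → wlCo L' x = q) := by
    intro L hLfg hN₀L B hBfin
    have hsupL : Module.support R (M ⧸ L) = Z := hsupp_eq L hLfg hN₀L
    have hbadfin : (PrimeSpectrum.asIdeal ⁻¹' (B ∪ A₀) : Set (PrimeSpectrum R)).Finite :=
      Set.Finite.preimage (fun a _ b _ h => PrimeSpectrum.ext h) (hBfin.union hA₀fin)
    obtain ⟨qP, hqPZ, hqPbad⟩ := (hZinf.diff hbadfin).nonempty
    have hqnB : qP.asIdeal ∉ B := fun h => hqPbad (Set.mem_union_left _ h)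
    have hqnA : qP.asIdeal ∉ A₀ := fun h => hqPbad (Set.mem_union_right _ h)
    -- pick a minimal associated prime of `M ⧸ N₀` below `qP`
    have hCne : ({P ∈ A₀ | P ≤ qP.asIdeal} : Set (Ideal R)).Nonempty := by
      obtain ⟨P, h1, h2⟩ := hZA qP hqPZ
      exact ⟨P, h1, h2⟩
    obtain ⟨p', ⟨hp'A, hp'le⟩, hp'min⟩ : ∃ p' ∈ ({P ∈ A₀ | P ≤ qP.asIdeal} : Set (Ideal R)),
        ∀ a ∈ ({P ∈ A₀ | P ≤ qP.asIdeal} : Set (Ideal R)), a ≤ p' → p' = a := by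
      obtain ⟨p', hp', hmin⟩ := (hA₀fin.subset (Set.sep_subset _ _)).exists_minimal hCne
      exact ⟨p', hp', fun a ha hle => le_antisymm (hmin ha hle) hle⟩
    have hp'prime : p'.IsPrime := (AssociatedPrimes.mem_iff.mp hp'A).isPrime
    have hp'Z : (⟨p', hp'prime⟩ : PrimeSpectrum R) ∈ Z := hassZ N₀ p' hp'A hp'prime
    -- `p'` is a minimal point of `Z`
    have hp'Zmin : ∀ z ∈ Z, z.asIdeal ≤ p' → z.asIdeal = p' := by
      intro z hz hle
      obtain ⟨Pz, hPzA, hPzle⟩ := hZA z hz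
      have h1 : Pz ∈ {P ∈ A₀ | P ≤ qP.asIdeal} := ⟨hPzA, (hPzle.trans hle).trans hp'le⟩
      have h2 : p' = Pz := hp'min Pz h1 (hPzle.trans hle)
      exact le_antisymm hle ((le_of_eq h2).trans hPzle)
    -- realize `p'` as a colon ideal of `L`
    have hp'supp : (⟨p', hp'prime⟩ : PrimeSpectrum R) ∈ Module.support R (M ⧸ L) := by
      rw [hsupL]; exact hp'Z
    obtain ⟨x₀, hx₀⟩ := mem_support_iff_wlCo.mp hp'supp
    obtain ⟨P₃, hP₃prime, ⟨xn, hP₃eq⟩, _, hP₃le⟩ := exists_assoc_le L hp'prime hx₀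
    have hP₃Z : (⟨P₃, hP₃prime⟩ : PrimeSpectrum R) ∈ Z := by
      rw [← hsupL]
      exact mem_support_iff_wlCo.mpr ⟨xn, le_of_eq hP₃eq.symm⟩
    have hxn : wlCo L xn = p' := by
      rw [← hP₃eq]
      exact hp'Zmin _ hP₃Z hP₃le
    -- the new submodule
    refine ⟨L ⊔ Submodule.map (LinearMap.toSpanSingleton R M xn) qP.asIdeal, xn, qP.asIdeal,
      ?_, le_sup_left, qP.isPrime, hqnB,
      ⟨⟨p', hp'prime⟩, hp'Z, lt_of_le_of_ne hp'le (fun h => hqnA (h ▸ hp'A))⟩, ?_, ?_⟩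
    · exact hLfg.sup ((IsNoetherian.noetherian qP.asIdeal).map _)
    · -- `wlCo L' xn = qn`
      apply le_antisymm
      · intro r hr
        rw [mem_wlCo] at hr
        obtain ⟨l, hl, w, hw, hlw⟩ := Submodule.mem_sup.mp hr
        obtain ⟨a, ha, haw⟩ := Submodule.mem_map.mp hw
        have haxn : w = a • xn := by rw [← haw, LinearMap.toSpanSingleton_apply]
        have hsub : (r - a) • xn ∈ L := by
          have e : (r - a) • xn = l := by
            rw [sub_smul, ← hlw, ← haxn]
            exact add_sub_cancel_right l w
          rw [e]; exact hl
        have hra : r - a ∈ p' := by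
          rw [← hxn, mem_wlCo]; exact hsub
        have : r - a + a ∈ qP.asIdeal := qP.asIdeal.add_mem (hp'le hra) ha
        rwa [sub_add_cancel] at this
      · intro a ha
        rw [mem_wlCo]
        refine Submodule.mem_sup_right (Submodule.mem_map.mpr ⟨a, ha, ?_⟩)
        rw [LinearMap.toSpanSingleton_apply]
    · -- persistence
      intro x q hxq hwit
      apply le_antisymm
      · intro r hr
        rw [mem_wlCo] at hr
        obtain ⟨l, hl, w, hw, hlw⟩ := Submodule.mem_sup.mp hr
        obtain ⟨a, ha, haw⟩ := Submodule.mem_map.mp hw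
        have haxn : w = a • xn := by rw [← haw, LinearMap.toSpanSingleton_apply]
        by_cases hap : a ∈ p'
        · have h1 : a • xn ∈ L := by
            have : a ∈ wlCo L xn := by rw [hxn]; exact hap
            exact mem_wlCo.mp this
          have h2 : r • x ∈ L := by
            rw [← hlw, haxn]
            exact L.add_mem hl h1
          rw [← hxq, mem_wlCo]
          exact h2
        · exfalso
          have hqp' : q ≤ p' := by
            intro t ht
            have htr : (t * r) • x ∈ L := by
              have : t * r ∈ wlCo L x := by rw [hxq]; exact Ideal.mul_mem_right r q ht
              exact mem_wlCo.mp this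
            have hrx : r • x = l + a • xn := by rw [← hlw, haxn]
            have h2 : (t * a) • xn ∈ L := by
              have e : (t * a) • xn = (t * r) • x - t • l := by
                calc (t * a) • xn = t • (a • xn) := by rw [mul_smul]
                  _ = t • (r • x - l) := by rw [eq_sub_of_add_eq' hrx.symm]
                  _ = (t * r) • x - t • l := by rw [smul_sub, mul_smul]
              rw [e]
              exact L.sub_mem htr (L.smul_mem t hl)
            have hta : t * a ∈ p' := by
              rw [← hxn, mem_wlCo]; exact h2
            rcases hp'prime.mem_or_mem hta with h | h
            · exact h
            · exact absurd h hap
          obtain ⟨wt, hwtZ, hwtlt⟩ := hwit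
          have heq : wt.asIdeal = p' := hp'Zmin wt hwtZ (le_of_lt (lt_of_lt_of_le hwtlt hqp'))
          rw [heq] at hwtlt
          exact lt_irrefl p' (lt_of_lt_of_le hwtlt hqp')
      · rw [← hxq]
        exact wlCo_mono le_sup_left x
  -- the recursive construction
  obtain ⟨f, hf⟩ := wl_nat_rec_choice
    (fun k s => s.1.FG ∧ N₀ ≤ s.1 ∧
      (∀ j, j < k → (s.2.2 j).IsPrime ∧ wlCo s.1 (s.2.1 j) = s.2.2 j ∧
        (∃ w ∈ Z, w.asIdeal < s.2.2 j)) ∧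
      (∀ j, j < k → ∀ i, i < j → s.2.2 i ≠ s.2.2 j))
    (fun k s s' => s.1 ≤ s'.1 ∧ ∀ j, j < k → s'.2.1 j = s.2.1 j ∧ s'.2.2 j = s.2.2 j)
    (⟨N₀, fun _ => (0 : M), fun _ => (⊥ : Ideal R)⟩ :
      Submodule R M × (ℕ → M) × (ℕ → Ideal R))
    ⟨hN₀fg, le_rfl, fun j hj => absurd hj (Nat.not_lt_zero j),
      fun j hj => absurd hj (Nat.not_lt_zero j)⟩
    (by
      rintro k ⟨L, xs, qs⟩ ⟨hfg, hN₀L, hinv, hdist⟩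
      obtain ⟨L', xn, qn, h1, h2, h3, h4, h5, h6, h7⟩ :=
        keystep L hfg hN₀L (qs '' {j | j < k}) ((Set.finite_Iio k).image qs)
      refine ⟨⟨L', Function.update xs k xn, Function.update qs k qn⟩,
        ⟨h1, hN₀L.trans h2, ?_, ?_⟩, h2, ?_⟩
      · intro j hj
        rcases Nat.lt_succ_iff_lt_or_eq.mp hj with hjk | rfl
        · have hne : j ≠ k := Nat.ne_of_lt hjk
          obtain ⟨hprime, hco, hwit⟩ := hinv j hjk
          simp only [Function.update_of_ne hne]
          exact ⟨hprime, h7 (xs j) (qs j) hco hwit, hwit⟩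
        · simp only [Function.update_self]
          exact ⟨h3, h6, h5⟩
      · intro j hj i hij
        rcases Nat.lt_succ_iff_lt_or_eq.mp hj with hjk | rfl
        · have hik : i ≠ k := Nat.ne_of_lt (hij.trans hjk)
          simp only [Function.update_of_ne (Nat.ne_of_lt hjk), Function.update_of_ne hik]
          exact hdist j hjk i hij
        · have hik : i ≠ j := Nat.ne_of_lt hij
          simp only [Function.update_of_ne hik, Function.update_self]
          intro hcontra
          exact h4 ⟨i, hij, hcontra⟩
      · intro j hj
        have hne : j ≠ k := Nat.ne_of_lt hj
        exact ⟨Function.update_of_ne hne _ _, Function.update_of_ne hne _ _⟩)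
  have hInv := fun k => (hf k).1
  have hRel := fun k => (hf k).2
  have hmono : ∀ j k, j ≤ k → (f j).1 ≤ (f k).1 := by
    intro j k h
    induction h with
    | refl => exact le_rfl
    | step h ih => exact ih.trans (hRel _).1
  have hstab : ∀ j k, j < k →
      (f k).2.1 j = (f (j + 1)).2.1 j ∧ (f k).2.2 j = (f (j + 1)).2.2 j := by
    intro j k h
    induction h with
    | refl => exact ⟨rfl, rfl⟩
    | @step m h ih =>
      obtain ⟨e1, e2⟩ := (hRel m).2 j h
      exact ⟨e1.trans ih.1, e2.trans ih.2⟩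
  set Lω := ⨆ k, (f k).1 with hLω
  have hmonog : Monotone (fun k => (f k).1) := fun a b h => hmono a b h
  have hdir : Directed (· ≤ ·) (fun k => (f k).1) := hmonog.directed_le
  have hco : ∀ j, wlCo Lω ((f (j + 1)).2.1 j) = (f (j + 1)).2.2 j := by
    intro j
    apply le_antisymm
    · intro r hr
      rw [mem_wlCo] at hr
      obtain ⟨k, hk⟩ := (Submodule.mem_iSup_of_directed _ hdir).mp hr
      have hj : j < max k (j + 1) := lt_of_lt_of_le (Nat.lt_succ_self j) (le_max_right _ _)
      have hk' : r • (f (j + 1)).2.1 j ∈ (f (max k (j + 1))).1 :=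
        hmono k _ (le_max_left _ _) hk
      obtain ⟨_, hco', _⟩ := (hInv (max k (j + 1))).2.2.1 j hj
      obtain ⟨e1, e2⟩ := hstab j (max k (j + 1)) hj
      rw [← e2, ← hco', mem_wlCo, e1]
      exact hk'
    · intro r hr
      rw [mem_wlCo]
      obtain ⟨_, hco', _⟩ := (hInv (j + 1)).2.2.1 j (Nat.lt_succ_self j)
      have : r • (f (j + 1)).2.1 j ∈ (f (j + 1)).1 := by
        rw [← mem_wlCo (L := (f (j + 1)).1), hco']
        exact hr
      exact (le_iSup (fun k => (f k).1) (j + 1)) this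
  have hass : ∀ j, (f (j + 1)).2.2 j ∈ associatedPrimes R (M ⧸ Lω) := by
    intro j
    obtain ⟨hprime, _, _⟩ := (hInv (j + 1)).2.2.1 j (Nat.lt_succ_self j)
    exact mem_associatedPrimes_iff_wlCo.mpr ⟨hprime, (f (j + 1)).2.1 j, (hco j).symm⟩
  have hinj : Function.Injective fun j => (f (j + 1)).2.2 j := by
    intro i j hij
    have hij' : (f (i + 1)).2.2 i = (f (j + 1)).2.2 j := hij
    by_contra hne
    rcases lt_trichotomy i j with h | h | h
    · have hd := (hInv (j + 1)).2.2.2 j (Nat.lt_succ_self j) i h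
      have he := (hstab i (j + 1) (h.trans (Nat.lt_succ_self j))).2
      exact hd (he.trans hij')
    · exact hne h
    · have hd := (hInv (i + 1)).2.2.2 i (Nat.lt_succ_self i) j h
      have he := (hstab j (i + 1) (h.trans (Nat.lt_succ_self i))).2
      exact hd (he.trans hij'.symm)
  exact Set.infinite_of_injective_forall_mem hinj hass (hwl Lω)
end

section
/- Let R be a commutative Noetherian ring and M an R-module. If there exists a finitely generated submodule N of M such that Supp_R(M/N) is a finite set (i.e., M is FSF), then M is weakly Laskerian: for every submodule L of M the set Ass_R(M/L) is finite. -/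
section Aux

variable {R : Type*} [CommRing R] {M : Type*} [AddCommGroup M] [Module R M]

/-- Associated primes of `M` are among those of a submodule `N` and of `M ⧸ N`. -/
theorem aux_ass_subset_union (N : Submodule R M) :
    associatedPrimes R M ⊆ associatedPrimes R N ∪ associatedPrimes R (M ⧸ N) := by
  exact associatedPrimes.subset_union_of_exact (f := N.subtype) (g := N.mkQ)
    N.injective_subtype (LinearMap.exact_subtype_mkQ N)

/-- Over a Noetherian ring, a finitely generated module has finitely many associated primes. -/
theorem aux_ass_finite_of_finite [IsNoetherianRing R] [Module.Finite R M] :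
    (associatedPrimes R M).Finite := by
  have hN : IsNoetherian R M := inferInstance
  obtain ⟨N, ⟨hNfin, hNmax⟩⟩ := set_has_maximal_iff_noetherian.mpr hN
    {N : Submodule R M | (associatedPrimes R N).Finite}
    ⟨⊥, by
      show (associatedPrimes R (⊥ : Submodule R M)).Finite
      rw [associatedPrimes.eq_empty_of_subsingleton]; exact Set.finite_empty⟩
  have hNtop : N = ⊤ := by
    by_contra hne
    have : N < ⊤ := lt_top_iff_ne_top.mpr hne
    have : Nontrivial (M ⧸ N) := Submodule.Quotient.nontrivial_iff.mpr this.ne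
    obtain ⟨p, hp0⟩ := associatedPrimes.nonempty R (M ⧸ N)
    obtain ⟨hp, xb, hxb⟩ := isAssociatedPrime_iff.mp hp0
    obtain ⟨x, rfl⟩ := N.mkQ_surjective xb
    have hxN : x ∉ N := by
      intro hx
      apply hp.ne_top
      rw [hxb]
      have : N.mkQ x = 0 := (Submodule.Quotient.mk_eq_zero N).mpr hx
      rw [this, eq_top_iff]; intro r _; rw [Submodule.mem_colon_singleton]; simp
    set N' : Submodule R M := N ⊔ Submodule.span R {x} with hN'
    have hle : N ≤ N' := le_sup_left
    have hlt : N < N' := lt_of_le_of_ne hle (by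
      intro hEq
      exact hxN (hEq ▸ Submodule.mem_sup_right (Submodule.mem_span_singleton_self x)))
    set N'' : Submodule R N' := N.comap N'.subtype with hN''
    have hxN' : x ∈ N' := Submodule.mem_sup_right (Submodule.mem_span_singleton_self x)
    -- the map R → N' ⧸ N'' sending r to r • x
    set φ : R →ₗ[R] N' ⧸ N'' := N''.mkQ.comp (LinearMap.toSpanSingleton R N' ⟨x, hxN'⟩) with hφ
    have hφsurj : Function.Surjective φ := by
      intro z
      obtain ⟨w, rfl⟩ := N''.mkQ_surjective z
      obtain ⟨n, hn, y, hy, hw⟩ := Submodule.mem_sup.mp w.2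
      obtain ⟨r, rfl⟩ := Submodule.mem_span_singleton.mp hy
      refine ⟨r, ?_⟩
      rw [hφ]
      simp only [LinearMap.comp_apply, LinearMap.toSpanSingleton_apply, Submodule.mkQ_apply]
      rw [Submodule.Quotient.eq]
      refine Submodule.mem_comap.mpr ?_
      have : (r • (⟨x, hxN'⟩ : N') - w : N') = (⟨r • x - w, by
          exact sub_mem (r • (⟨x, hxN'⟩ : N')).2 w.2⟩ : N') := by
        ext; simp
      rw [this]
      show r • x - (w : M) ∈ N
      have : (w : M) = n + r • x := hw.symm
      rw [this]
      simpa using neg_mem hn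
    have hker : LinearMap.ker φ = p := by
      ext s
      rw [hφ]
      simp only [LinearMap.mem_ker, LinearMap.comp_apply, LinearMap.toSpanSingleton_apply,
        Submodule.mkQ_apply, Submodule.Quotient.mk_eq_zero]
      rw [hN'']
      simp only [Submodule.mem_comap]
      show s • x ∈ N ↔ s ∈ p
      rw [hxb, Submodule.mem_colon_singleton, Submodule.mem_bot, ← map_smul, Submodule.mkQ_apply,
        Submodule.Quotient.mk_eq_zero]
    have hAssQuot : associatedPrimes R (N' ⧸ N'') = {p} := by
      have e : (R ⧸ LinearMap.ker φ) ≃ₗ[R] (N' ⧸ N'') := φ.quotKerEquivOfSurjective hφsurj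
      rw [hker] at e
      rw [← LinearEquiv.AssociatedPrimes.eq e]
      have := associatedPrimes.eq_singleton_of_isPrimary (Ideal.IsPrime.isPrimary hp)
      rwa [hp.radical] at this
    have hAssN'' : associatedPrimes R N'' = associatedPrimes R N :=
      LinearEquiv.AssociatedPrimes.eq (Submodule.comapSubtypeEquivOfLe hle)
    have hfin : (associatedPrimes R N').Finite := by
      refine Set.Finite.subset ((hNfin.union (Set.finite_singleton p)).subset ?_)
        (aux_ass_subset_union N'')
      rw [hAssN'', hAssQuot]
    exact hNmax N' hfin hlt
  subst hNtop
  rwa [← LinearEquiv.AssociatedPrimes.eq (Submodule.topEquiv)]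

/-- Associated primes lie in the support. -/
theorem aux_ass_subset_supp :
    associatedPrimes R M ⊆ PrimeSpectrum.asIdeal '' Module.support R M := by
  rintro p ⟨hp, x, rfl⟩
  exact ⟨⟨_, hp⟩, Module.mem_support_iff_exists_annihilator.mpr ⟨x, fun r hr => Ideal.le_radical (by
    rw [Submodule.mem_colon_singleton, Submodule.mem_bot]
    exact (Submodule.mem_annihilator_span_singleton _ _).mp hr)⟩, rfl⟩

end Aux

/-- Let `R` be a commutative Noetherian ring and `M` an `R`-module. If there exists a
finitely generated submodule `N` of `M` with `Supp_R(M/N)` finite (i.e. `M` is FSF),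
then `M` is weakly Laskerian: `Ass_R(M/L)` is finite for every submodule `L` of `M`. -/
theorem isFSF_weaklyLaskerian
    {R : Type*} [CommRing R] [IsNoetherianRing R]
    {M : Type*} [AddCommGroup M] [Module R M]
    (hfsf : ∃ N : Submodule R M, N.FG ∧ (Module.support R (M ⧸ N)).Finite) :
    ∀ L : Submodule R M, (associatedPrimes R (M ⧸ L)).Finite := by
  obtain ⟨N, hfg, hsupp⟩ := hfsf
  intro L
  set K : Submodule R (M ⧸ L) := N.map L.mkQ with hK
  have h1 : (associatedPrimes R K).Finite := by
    have : Module.Finite R K := Module.Finite.iff_fg.mpr (hfg.map _)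
    exact aux_ass_finite_of_finite
  have hKeq : (N ⊔ L).map L.mkQ = K := by
    rw [Submodule.map_sup, hK]
    have : L.map L.mkQ = ⊥ := by
      rw [eq_bot_iff, Submodule.map_le_iff_le_comap, Submodule.comap_bot, Submodule.ker_mkQ]
    rw [this, sup_bot_eq]
  have h2 : (associatedPrimes R ((M ⧸ L) ⧸ K)).Finite := by
    have e : ((M ⧸ L) ⧸ K) ≃ₗ[R] M ⧸ (N ⊔ L) := by
      rw [← hKeq]
      exact Submodule.quotientQuotientEquivQuotient L (N ⊔ L) le_sup_right
    rw [LinearEquiv.AssociatedPrimes.eq e]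
    -- M ⧸ (N ⊔ L) is a quotient of M ⧸ N, so its support is finite
    have hsurj : Function.Surjective (Submodule.mapQ N (N ⊔ L) LinearMap.id le_sup_left) := by
      intro z
      obtain ⟨m, rfl⟩ := (N ⊔ L).mkQ_surjective z
      exact ⟨N.mkQ m, by simp [Submodule.mapQ_apply]⟩
    have hsupp' : (Module.support R (M ⧸ (N ⊔ L))).Finite :=
      (hsupp.subset (Module.support_subset_of_surjective _ hsurj))
    exact (hsupp'.image PrimeSpectrum.asIdeal).subset aux_ass_subset_supp
  exact ((h1.union h2).subset (aux_ass_subset_union K))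
end

section
/- Let R be a commutative Noetherian ring, M an R-module, N a finitely generated submodule of M with Supp_R(M/N) finite, and L an arbitrary submodule of M. Then Ass_R(M/L) ⊆ Ass_R(M/(N+L)) ∪ Ass_R(N/(N ∩ L)); in particular, Ass_R(M/L) is a finite set. -/
section Aux

variable {R : Type*} [CommRing R] {X : Type*} [AddCommGroup X] [Module R X]

/-- Associated primes of a module are contained in the union of those of a submodule and the
quotient. -/
theorem ass_subset_union_of_submodule (K : Submodule R X) :
    associatedPrimes R X ⊆ associatedPrimes R K ∪ associatedPrimes R (X ⧸ K) := by
  exact associatedPrimes.subset_union_of_exact K.injective_subtype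
    (LinearMap.exact_subtype_mkQ K)

/-- Associated primes lie in the support. -/
theorem ass_subset_asIdeal_image_support :
    associatedPrimes R X ⊆ PrimeSpectrum.asIdeal '' Module.support R X := by
  rintro p ⟨hp, x, hx⟩
  refine ⟨⟨p, hp⟩, ?_, rfl⟩
  rw [Module.mem_support_iff_exists_annihilator]
  exact ⟨x, fun r hr => hx.ge (Ideal.le_radical (by
    rwa [Submodule.mem_colon_singleton, Submodule.mem_bot,
      ← Submodule.mem_annihilator_span_singleton]))⟩

/-- Associated primes of a finitely generated module over a Noetherian ring form a finite set. -/
theorem ass_finite_of_finite [IsNoetherianRing R] [Module.Finite R X] :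
    (associatedPrimes R X).Finite := by
  have hNoeth : IsNoetherian R X := isNoetherian_of_isNoetherianRing_of_finite R X
  by_contra hinf
  have hS : {N : Submodule R X | ¬ (associatedPrimes R (X ⧸ N)).Finite}.Nonempty := by
    refine ⟨⊥, ?_⟩
    intro hfin
    exact hinf ((LinearEquiv.AssociatedPrimes.eq
      (Submodule.quotEquivOfEqBot (⊥ : Submodule R X) rfl)) ▸ hfin)
  obtain ⟨N, hN, hmax⟩ := set_has_maximal_iff_noetherian.mpr hNoeth
    {N : Submodule R X | ¬ (associatedPrimes R (X ⧸ N)).Finite} hS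
  have hnt : Nontrivial (X ⧸ N) := by
    by_contra h
    rw [not_nontrivial_iff_subsingleton] at h
    exact hN (by rw [associatedPrimes.eq_empty_of_subsingleton]; exact Set.finite_empty)
  obtain ⟨p, hp⟩ := associatedPrimes.nonempty R (X ⧸ N)
  obtain ⟨hpp, x, hx⟩ := isAssociatedPrime_iff.mp hp
  have hx0 : x ≠ 0 := by
    intro h
    apply hpp.ne_top
    rw [hx, h, Submodule.colon_singleton_zero]
  have hNN' : N ≤ Submodule.comap N.mkQ (Submodule.span R {x}) := by
    intro a ha
    simp only [Submodule.mem_comap, Submodule.mkQ_apply]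
    rw [(Submodule.Quotient.mk_eq_zero N).mpr ha]
    exact Submodule.zero_mem _
  have hlt : N < Submodule.comap N.mkQ (Submodule.span R {x}) := by
    refine lt_of_le_of_ne hNN' ?_
    intro h
    obtain ⟨x₀, rfl⟩ := N.mkQ_surjective x
    have hmem : x₀ ∈ Submodule.comap N.mkQ (Submodule.span R {N.mkQ x₀}) :=
      Submodule.mem_span_singleton_self _
    rw [← h] at hmem
    exact hx0 ((Submodule.Quotient.mk_eq_zero N).mpr hmem)
  have hN'fin : (associatedPrimes R (X ⧸ Submodule.comap N.mkQ (Submodule.span R {x}))).Finite := by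
    by_contra h
    exact absurd (hmax _ h) (by simpa using hlt)
  -- span R {x} ≃ R ⧸ p, so its associated primes are {p}
  have hKass : associatedPrimes R (Submodule.span R {x}) = {p} := by
    let f : R →ₗ[R] X ⧸ N := LinearMap.toSpanSingleton R _ x
    have hker : LinearMap.ker f = p := by
      ext r
      rw [LinearMap.mem_ker, hx, Submodule.mem_colon_singleton, Submodule.mem_bot]
      simp [f, LinearMap.toSpanSingleton_apply]
    have e : (R ⧸ p) ≃ₗ[R] Submodule.span R {x} := by
      exact (Submodule.quotEquivOfEq p (LinearMap.ker f) hker.symm) ≪≫ₗ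
        f.quotKerEquivRange ≪≫ₗ
        (LinearEquiv.ofEq _ _ (LinearMap.span_singleton_eq_range R _ x).symm)
    rw [← LinearEquiv.AssociatedPrimes.eq e,
      associatedPrimes.eq_singleton_of_isPrimary hpp.isPrimary, hpp.radical]
  have hquot :
      (associatedPrimes R ((X ⧸ N) ⧸ (Submodule.span R {x} : Submodule R (X ⧸ N)))).Finite := by
    have hmap : Submodule.map N.mkQ (Submodule.comap N.mkQ (Submodule.span R {x}))
        = Submodule.span R {x} := by
      rw [Submodule.map_comap_eq, Submodule.range_mkQ, top_inf_eq]
    have e : ((X ⧸ N) ⧸ (Submodule.span R {x} : Submodule R (X ⧸ N))) ≃ₗ[R]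
        X ⧸ Submodule.comap N.mkQ (Submodule.span R {x}) := by
      exact (Submodule.quotEquivOfEq _ _ hmap.symm).trans
        (Submodule.quotientQuotientEquivQuotient N _ hNN')
    rw [LinearEquiv.AssociatedPrimes.eq e]
    exact hN'fin
  apply hN
  refine Set.Finite.subset (Set.Finite.union (hKass ▸ Set.finite_singleton p) hquot) ?_
  exact ass_subset_union_of_submodule (Submodule.span R {x})

end Aux

/-- Let `R` be a commutative Noetherian ring, `M` an `R`-module, `N` a finitely generated
submodule of `M` with `Supp_R(M/N)` finite, and `L` an arbitrary submodule of `M`. Then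
`Ass_R(M/L) ⊆ Ass_R(M/(N+L)) ∪ Ass_R(N/(N ∩ L))`; in particular `Ass_R(M/L)` is finite. -/
theorem associatedPrimes_quotient_subset_union_of_fg_finite_support
    {R : Type*} [CommRing R] [IsNoetherianRing R]
    {M : Type*} [AddCommGroup M] [Module R M]
    (N : Submodule R M) (hNfg : N.FG) (hNsupp : (Module.support R (M ⧸ N)).Finite)
    (L : Submodule R M) :
    associatedPrimes R (M ⧸ L) ⊆
      associatedPrimes R (M ⧸ (N ⊔ L)) ∪
        associatedPrimes R (N ⧸ ((N ⊓ L).comap N.subtype)) ∧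
    (associatedPrimes R (M ⧸ L)).Finite := by
  -- the image of N ⊔ L in M ⧸ L
  have hLle : L ≤ N ⊔ L := le_sup_right
  -- (M⧸L)⧸K ≃ M⧸(N⊔L)
  have e₁ : ((M ⧸ L) ⧸ Submodule.map L.mkQ (N ⊔ L)) ≃ₗ[R] M ⧸ (N ⊔ L) :=
    Submodule.quotientQuotientEquivQuotient L (N ⊔ L) hLle
  -- K ≃ N ⧸ (N ⊓ L).comap N.subtype
  have hKmap : Submodule.map L.mkQ (N ⊔ L) = Submodule.map L.mkQ N := by
    rw [Submodule.map_sup]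
    have h0 : Submodule.map L.mkQ L = ⊥ := by
      rw [eq_bot_iff]
      rintro y hy
      obtain ⟨a, ha, rfl⟩ := hy
      simpa using (Submodule.Quotient.mk_eq_zero L).mpr ha
    rw [h0, sup_bot_eq]
  have e₂ : (N ⧸ ((N ⊓ L).comap N.subtype)) ≃ₗ[R] Submodule.map L.mkQ (N ⊔ L) := by
    rw [hKmap]
    let f : N →ₗ[R] M ⧸ L := L.mkQ ∘ₗ N.subtype
    have hker : LinearMap.ker f = (N ⊓ L).comap N.subtype := by
      ext n
      simp only [f, LinearMap.mem_ker, LinearMap.coe_comp, Function.comp_apply,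
        Submodule.coe_subtype, Submodule.mkQ_apply, Submodule.Quotient.mk_eq_zero,
        Submodule.mem_comap, Submodule.mem_inf]
      exact ⟨fun h => ⟨n.2, h⟩, fun h => h.2⟩
    have hrange : LinearMap.range f = Submodule.map L.mkQ N := by
      rw [show f = L.mkQ ∘ₗ N.subtype from rfl, LinearMap.range_comp, Submodule.range_subtype]
    exact (Submodule.quotEquivOfEq _ _ hker.symm) ≪≫ₗ f.quotKerEquivRange ≪≫ₗ
      (LinearEquiv.ofEq _ _ hrange)
  have hsub : associatedPrimes R (M ⧸ L) ⊆
      associatedPrimes R (M ⧸ (N ⊔ L)) ∪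
        associatedPrimes R (N ⧸ ((N ⊓ L).comap N.subtype)) := by
    intro p hp
    rcases ass_subset_union_of_submodule (Submodule.map L.mkQ (N ⊔ L)) hp with h | h
    · right
      rwa [LinearEquiv.AssociatedPrimes.eq e₂]
    · left
      rwa [← LinearEquiv.AssociatedPrimes.eq e₁]
  refine ⟨hsub, ?_⟩
  refine Set.Finite.subset (Set.Finite.union ?_ ?_) hsub
  · -- Ass(M⧸(N⊔L)) ⊆ Supp(M⧸(N⊔L)) ⊆ Supp(M⧸N), finite
    refine Set.Finite.subset ((hNsupp.image PrimeSpectrum.asIdeal).subset ?_)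
      ass_subset_asIdeal_image_support
    refine Set.image_mono ?_
    let f : (M ⧸ N) →ₗ[R] M ⧸ (N ⊔ L) := Submodule.mapQ N (N ⊔ L) LinearMap.id le_sup_left
    have hf : Function.Surjective f := by
      intro z
      obtain ⟨m, rfl⟩ := (N ⊔ L).mkQ_surjective z
      exact ⟨N.mkQ m, by simp [f, Submodule.mapQ_apply]⟩
    exact Module.support_subset_of_surjective f hf
  · -- N is f.g., so the quotient is a finite module
    have h1 : Module.Finite R N := Module.Finite.iff_fg.mpr hNfg
    have h2 : Module.Finite R (N ⧸ ((N ⊓ L).comap N.subtype)) := Module.Finite.quotient R _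
    exact ass_finite_of_finite
end

section
/- Let R be a commutative Noetherian ring, M an R-module, L a submodule of M, x ∈ M, q = (0 :_R x + L) = {r ∈ R : rx ∈ L}, and let p be a prime ideal of R with q ⊆ p. Set L' = L + p·x (the submodule generated by L and {ax : a ∈ p}). Then (0 :_R x + L') = p; in particular, if moreover p ⊈ q, then p ∈ Ass_R(M/L'). -/
/-- Let `R` be a commutative Noetherian ring, `M` an `R`-module, `L` a submodule of `M`,
`x ∈ M`, `q = (0 :_R x + L) = {r : R | r • x ∈ L}`, and `p` a prime ideal with `q ⊆ p`.
Set `L' = L + p·x`. Then `(0 :_R x + L') = p`; in particular, if moreover `p ⊈ q`,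
then `p ∈ Ass_R(M/L')`. -/
theorem colon_step_eq_and_mem_associatedPrimes
    {R : Type*} [CommRing R] [IsNoetherianRing R]
    {M : Type*} [AddCommGroup M] [Module R M]
    (L : Submodule R M) (x : M) (q : Ideal R)
    (hq : ∀ r : R, r ∈ q ↔ r • x ∈ L)
    (p : Ideal R) (hp : p.IsPrime) (hqp : q ≤ p)
    (L' : Submodule R M)
    (hL' : L' = L ⊔ Submodule.map (LinearMap.toSpanSingleton R M x) p) :
    (∀ r : R, r ∈ p ↔ r • x ∈ L') ∧ (¬ p ≤ q → p ∈ associatedPrimes R (M ⧸ L')) := by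
  have key : ∀ r : R, r ∈ p ↔ r • x ∈ L' := by
    intro r
    constructor
    · intro hr
      rw [hL']
      exact Submodule.mem_sup_right ⟨r, hr, rfl⟩
    · intro hr
      rw [hL', Submodule.mem_sup] at hr
      obtain ⟨y, hy, z, hz, hyz⟩ := hr
      obtain ⟨a, ha, rfl⟩ := hz
      have : (r - a) • x ∈ L := by
        have : (r - a) • x = y := by
          simp only [LinearMap.toSpanSingleton_apply] at hyz
          rw [sub_smul]
          rw [← hyz]; abel
        rw [this]; exact hy
      have := hqp ((hq _).2 this)
      have : (r - a) + a ∈ p := p.add_mem this ha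
      simpa using this
  refine ⟨key, fun _ => ?_⟩
  refine ⟨hp, Submodule.Quotient.mk x, ?_⟩
  ext r
  have hc : (⊥ : Submodule R (M ⧸ L')).colon {Submodule.Quotient.mk x} = p := Ideal.ext fun s => by
    rw [Submodule.mem_colon_singleton, Submodule.mem_bot, key s, ← Submodule.Quotient.mk_smul, Submodule.Quotient.mk_eq_zero]
  rw [hc, hp.radical]
end

section
/- Let R be a commutative Noetherian ring and M an R-module. Suppose given, for every integer i ≥ 1, an element x_i ∈ M, prime ideals p_i and q_i of R, and a submodule M_i of M, with M_0 = 0, such that for every i ≥ 1: (a) p_i is a maximal element, under inclusion, of the set Supp_R(M/M_{i-1}) \ Ass_R(M/M_{i-1}); (b) q_i ∈ Ass_R(M/M_{i-1}), q_i = (0 :_R x_i + M_{i-1}), and q_i ⊆ p_i; (c) M_i = M_{i-1} + p_i·x_i. Then for all integers i, j with 1 ≤ i ≤ j one has p_i = (0 :_R x_i + M_j), and in particular p_i ∈ Ass_R(M/M_j). -/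
/-- Let `R` be a commutative Noetherian ring and `M` an `R`-module. Suppose given, for every
`i ≥ 1`, an element `x i ∈ M`, prime ideals `p i`, `q i`, and a submodule `Msub i` of `M`,
with `Msub 0 = 0`, such that for every `i ≥ 1`:
(a) `p i` is a maximal element, under inclusion, of `Supp_R(M/Msub (i-1)) \ Ass_R(M/Msub (i-1))`;
(b) `q i ∈ Ass_R(M/Msub (i-1))`, `q i = (0 :_R x i + Msub (i-1))`, and `q i ⊆ p i`;
(c) `Msub i = Msub (i-1) + (p i)·(x i)`.
Then for all `1 ≤ i ≤ j`, `p i = (0 :_R x i + Msub j)`; in particular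
`p i ∈ Ass_R(M/Msub j)`. -/
theorem colon_eq_p_of_construction
    {R : Type*} [CommRing R] [IsNoetherianRing R]
    {M : Type*} [AddCommGroup M] [Module R M]
    (x : ℕ → M) (p q : ℕ → Ideal R) (Msub : ℕ → Submodule R M)
    (hM0 : Msub 0 = ⊥)
    (hp_supp : ∀ i : ℕ, ∃ h : (p (i + 1)).IsPrime,
      (⟨p (i + 1), h⟩ : PrimeSpectrum R) ∈ Module.support R (M ⧸ Msub i))
    (hp_nass : ∀ i : ℕ, p (i + 1) ∉ associatedPrimes R (M ⧸ Msub i))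
    (hp_max : ∀ i : ℕ, ∀ J : Ideal R,
      (∃ hJ : J.IsPrime, (⟨J, hJ⟩ : PrimeSpectrum R) ∈ Module.support R (M ⧸ Msub i)) →
      J ∉ associatedPrimes R (M ⧸ Msub i) → p (i + 1) ≤ J → J = p (i + 1))
    (hq_ass : ∀ i : ℕ, q (i + 1) ∈ associatedPrimes R (M ⧸ Msub i))
    (hq_eq : ∀ i : ℕ, ∀ r : R, r ∈ q (i + 1) ↔ r • x (i + 1) ∈ Msub i)
    (hqp : ∀ i : ℕ, q (i + 1) ≤ p (i + 1))
    (hMsucc : ∀ i : ℕ, Msub (i + 1) =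
      Msub i ⊔ Submodule.map (LinearMap.toSpanSingleton R M (x (i + 1))) (p (i + 1))) :
    ∀ i j : ℕ, 1 ≤ i → i ≤ j →
      (∀ r : R, r ∈ p i ↔ r • x i ∈ Msub j) ∧ p i ∈ associatedPrimes R (M ⧸ Msub j) := by
  classical
  -- primality facts
  have pPrime : ∀ n : ℕ, (p (n + 1)).IsPrime := fun n => (hp_supp n).choose
  have qPrime : ∀ n : ℕ, (q (n + 1)).IsPrime := fun n => (hq_ass n).1
  have qlt : ∀ n : ℕ, q (n + 1) < p (n + 1) := by
    intro n
    refine lt_of_le_of_ne (hqp n) ?_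
    intro h
    exact hp_nass n (h ▸ hq_ass n)
  -- monotonicity of the filtration
  have mono : ∀ k l : ℕ, k ≤ l → Msub k ≤ Msub l := by
    intro k l h
    refine Nat.le_induction le_rfl (fun n hn ih => ?_) l h
    rw [hMsucc n]
    exact le_trans ih le_sup_left
  -- annihilator of a coset
  have mkAnn : ∀ (k : ℕ) (z : M) (r : R),
      r ∈ (⊥ : Submodule R (M ⧸ Msub k)).colon {(Submodule.Quotient.mk z : M ⧸ Msub k)} ↔
        r • z ∈ Msub k := by
    intro k z r
    rw [Submodule.mem_colon_singleton, Submodule.mem_bot, ← Submodule.Quotient.mk_smul,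
      Submodule.Quotient.mk_eq_zero]
  -- support monotone under quotient
  have suppmono : ∀ k l : ℕ, k ≤ l →
      Module.support R (M ⧸ Msub l) ⊆ Module.support R (M ⧸ Msub k) := by
    intro k l h
    refine Module.support_subset_of_surjective
      (Submodule.mapQ (Msub k) (Msub l) LinearMap.id (by simpa using mono k l h)) ?_
    rintro ⟨z⟩
    exact ⟨Submodule.Quotient.mk z, rfl⟩
  -- base case: p (n+1) is the colon of x (n+1) in Msub (n+1)
  have base : ∀ (n : ℕ) (r : R), r ∈ p (n + 1) ↔ r • x (n + 1) ∈ Msub (n + 1) := by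
    intro n r
    rw [hMsucc n]
    constructor
    · intro hr
      exact Submodule.mem_sup_right ⟨r, hr, by simp [LinearMap.toSpanSingleton_apply]⟩
    · intro h
      obtain ⟨m, hm, y, hy, hsum⟩ := Submodule.mem_sup.mp h
      obtain ⟨a, ha, rfl⟩ := hy
      have hsub : (r - a) • x (n + 1) ∈ Msub n := by
        have : (r - a) • x (n + 1) = m := by
          rw [sub_smul]
          rw [LinearMap.toSpanSingleton_apply] at hsum
          rw [← hsum]
          abel
        rw [this]; exact hm
      have hq := hqp n ((hq_eq n (r - a)).mpr hsub)
      have : r = (r - a) + a := by ring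
      rw [this]
      exact add_mem hq ha
  -- good step: if q (n+1) is not contained in P, colon ideals persist
  have stepGood : ∀ (n : ℕ) (z : M) (P : Ideal R), P.IsPrime → ¬ q (n + 1) ≤ P →
      (∀ r : R, r ∈ P ↔ r • z ∈ Msub n) → ∀ r : R, r ∈ P ↔ r • z ∈ Msub (n + 1) := by
    intro n z P hP hnq hann r
    constructor
    · intro hr
      exact mono n (n + 1) (Nat.le_succ n) ((hann r).mp hr)
    · intro hr
      rw [hMsucc n] at hr
      obtain ⟨m, hm, y, hy, hsum⟩ := Submodule.mem_sup.mp hr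
      obtain ⟨a, ha, rfl⟩ := hy
      obtain ⟨t, htq, htP⟩ := SetLike.not_le_iff_exists.mp hnq
      have h1 : t • x (n + 1) ∈ Msub n := (hq_eq n t).mp htq
      have h2 : (t * r) • z ∈ Msub n := by
        have : (t * r) • z = t • m + a • (t • x (n + 1)) := by
          rw [LinearMap.toSpanSingleton_apply] at hsum
          rw [mul_smul, ← hsum, smul_add, smul_comm t a]
        rw [this]
        exact add_mem (Submodule.smul_mem _ _ hm) (Submodule.smul_mem _ _ h1)
      exact (hP.mem_or_mem ((hann _).mpr h2)).resolve_left htP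
  -- bad case: forced equality P = q (n+1)
  have badEq : ∀ (n : ℕ) (z : M) (P : Ideal R), P.IsPrime →
      (∀ r : R, r ∈ P ↔ r • z ∈ Msub n) → ∀ s a : R, s • z ∉ Msub n →
      s • z - a • x (n + 1) ∈ Msub n → P = q (n + 1) := by
    intro n z P hP hann s a hs hmem
    have hsP : s ∉ P := fun h => hs ((hann s).mp h)
    have haq : a ∉ q (n + 1) := by
      intro h
      apply hs
      have h1 := (hq_eq n a).mp h
      have : s • z = (s • z - a • x (n + 1)) + a • x (n + 1) := by abel
      rw [this]
      exact add_mem hmem h1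
    ext t
    constructor
    · intro ht
      have h1 : (t * s) • z ∈ Msub n := (hann _).mp (Ideal.mul_mem_right s _ ht)
      have h2 : t • (s • z - a • x (n + 1)) ∈ Msub n := Submodule.smul_mem _ _ hmem
      have h3 : (t * a) • x (n + 1) ∈ Msub n := by
        have : (t * a) • x (n + 1) = (t * s) • z - t • (s • z - a • x (n + 1)) := by
          rw [mul_smul, mul_smul, smul_sub]
          abel
        rw [this]
        exact sub_mem h1 h2
      exact ((qPrime n).mem_or_mem ((hq_eq n _).mpr h3)).resolve_right haq
    · intro ht
      have h1 : (t * a) • x (n + 1) ∈ Msub n := by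
        rw [mul_comm, mul_smul]
        exact Submodule.smul_mem _ a ((hq_eq n t).mp ht)
      have h2 : (t * s) • z ∈ Msub n := by
        have : (t * s) • z = t • (s • z - a • x (n + 1)) + (t * a) • x (n + 1) := by
          rw [mul_smul, mul_smul, smul_sub]
          abel
        rw [this]
        exact add_mem (Submodule.smul_mem _ _ hmem) h1
      exact (hP.mem_or_mem ((hann _).mpr h2)).resolve_right hsP
  -- step of the associated-prime chase
  have stepAss : ∀ (n : ℕ) (P : Ideal R), P ∈ associatedPrimes R (M ⧸ Msub n) →
      P = q (n + 1) ∨ P ∈ associatedPrimes R (M ⧸ Msub (n + 1)) := by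
    intro n P hPmem
    obtain ⟨hP, z0, hz0⟩ := isAssociatedPrime_iff.mp hPmem
    obtain ⟨z, rfl⟩ := Submodule.Quotient.mk_surjective _ z0
    have hann : ∀ r : R, r ∈ P ↔ r • z ∈ Msub n := by
      intro r
      rw [hz0]
      exact mkAnn n z r
    by_cases hcase : ∀ s : R, s • z ∈ Msub (n + 1) → s • z ∈ Msub n
    · right
      refine isAssociatedPrime_iff.mpr ⟨hP, Submodule.Quotient.mk z, ?_⟩
      ext r
      rw [mkAnn (n + 1) z r]
      exact ⟨fun h => mono n (n + 1) (Nat.le_succ n) ((hann r).mp h),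
        fun h => (hann r).mpr (hcase r h)⟩
    · left
      push_neg at hcase
      obtain ⟨s, hs1, hs2⟩ := hcase
      rw [hMsucc n] at hs1
      obtain ⟨m, hm, y, hy, hsum⟩ := Submodule.mem_sup.mp hs1
      obtain ⟨a, ha, rfl⟩ := hy
      refine badEq n z P hP hann s a hs2 ?_
      have : s • z - a • x (n + 1) = m := by
        rw [LinearMap.toSpanSingleton_apply] at hsum
        rw [← hsum]
        abel
      rw [this]; exact hm
  -- the chase: an associated prime that disappears must be some q
  have chase : ∀ (b a : ℕ) (P : Ideal R), a ≤ b → P ∈ associatedPrimes R (M ⧸ Msub a) →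
      P ∉ associatedPrimes R (M ⧸ Msub b) → ∃ m, a ≤ m ∧ m < b ∧ P = q (m + 1) := by
    intro b
    induction b with
    | zero =>
      intro a P hab h1 h2
      exact absurd (Nat.le_zero.mp hab ▸ h1) h2
    | succ b ih =>
      intro a P hab h1 h2
      rcases Nat.eq_or_lt_of_le hab with heq | hlt
      · exact absurd (heq ▸ h1) h2
      · have hab' : a ≤ b := Nat.lt_succ_iff.mp hlt
        by_cases hb : P ∈ associatedPrimes R (M ⧸ Msub b)
        · rcases stepAss b P hb with heq' | hmem
          · exact ⟨b, hab', Nat.lt_succ_self b, heq'⟩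
          · exact absurd hmem h2
        · obtain ⟨m, hm1, hm2, hm3⟩ := ih a P hab' h1 hb
          exact ⟨m, hm1, Nat.lt_succ_of_lt hm2, hm3⟩
  -- a prime strictly above p (i+1) that is in Supp(M/Msub i) is in Ass(M/Msub i)
  have aboveAss : ∀ (i m : ℕ), i ≤ m → p (i + 1) < p (m + 1) →
      p (m + 1) ∈ associatedPrimes R (M ⧸ Msub i) := by
    intro i m him hlt
    by_contra hA
    have hsupp : (⟨p (m + 1), pPrime m⟩ : PrimeSpectrum R) ∈
        Module.support R (M ⧸ Msub i) := by
      obtain ⟨h, hs⟩ := hp_supp m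
      exact suppmono i m him hs
    exact absurd (hp_max i (p (m + 1)) ⟨pPrime m, hsupp⟩ hA (le_of_lt hlt)) (ne_of_gt hlt)
  -- main contradiction engine (Claim E)
  have claimE : ∀ k i : ℕ, i ≤ k → p (i + 1) < p (k + 1) →
      p (k + 1) ∈ associatedPrimes R (M ⧸ Msub i) → False := by
    intro k
    induction k using Nat.strong_induction_on with
    | _ k ih =>
      intro i hik hlt hmem
      obtain ⟨m, him, hmk, heq⟩ := chase k i (p (k + 1)) hik hmem (hp_nass k)
      have hlt2 : p (i + 1) < p (m + 1) := lt_of_lt_of_le hlt (heq ▸ hqp m)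
      exact ih m hmk i him hlt2 (aboveAss i m him hlt2)
  -- main induction on j
  have main : ∀ i0 j : ℕ, i0 + 1 ≤ j → ∀ r : R, r ∈ p (i0 + 1) ↔ r • x (i0 + 1) ∈ Msub j := by
    intro i0 j hj
    refine Nat.le_induction (base i0) (fun n hn ih => ?_) j hj
    intro r
    constructor
    · intro hr
      exact mono n (n + 1) (Nat.le_succ n) ((ih r).mp hr)
    · intro hr
      by_contra hrp
      rw [hMsucc n] at hr
      obtain ⟨m, hm, y, hy, hsum⟩ := Submodule.mem_sup.mp hr
      obtain ⟨a, ha, rfl⟩ := hy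
      have hnotin : r • x (i0 + 1) ∉ Msub n := fun h => hrp ((ih r).mpr h)
      have hPq : p (i0 + 1) = q (n + 1) := by
        refine badEq n (x (i0 + 1)) (p (i0 + 1)) (pPrime i0) ih r a hnotin ?_
        have : r • x (i0 + 1) - a • x (n + 1) = m := by
          rw [LinearMap.toSpanSingleton_apply] at hsum
          rw [← hsum]
          abel
        rw [this]; exact hm
      have hlt : p (i0 + 1) < p (n + 1) := by
        refine lt_of_le_of_ne (hPq ▸ hqp n) ?_
        intro h
        exact hp_nass n (h ▸ hPq ▸ hq_ass n)
      have hi0n : i0 ≤ n := Nat.le_of_succ_le hn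
      exact claimE n i0 hi0n hlt (aboveAss i0 n hi0n hlt)
  -- assemble
  intro i j hi hij
  obtain ⟨i0, rfl⟩ : ∃ i0, i = i0 + 1 := ⟨i - 1, (Nat.succ_pred_eq_of_pos hi).symm⟩
  refine ⟨main i0 j hij, isAssociatedPrime_iff.mpr ⟨pPrime i0, Submodule.Quotient.mk (x (i0 + 1)), ?_⟩⟩
  ext r
  rw [mkAnn j (x (i0 + 1)) r]
  exact main i0 j hij r
end

section
/- Let R be a commutative Noetherian ring and M an R-module. Suppose given, for every integer i ≥ 1, an element x_i ∈ M, prime ideals p_i and q_i of R, and a submodule M_i of M, with M_0 = 0, such that for every i ≥ 1: (a) p_i is a maximal element, under inclusion, of the set Supp_R(M/M_{i-1}) \ Ass_R(M/M_{i-1}); (b) q_i ∈ Ass_R(M/M_{i-1}), q_i = (0 :_R x_i + M_{i-1}), and q_i ⊆ p_i; (c) M_i = M_{i-1} + p_i·x_i. Then for all integers i, j with 1 ≤ i < j one has p_i ⊈ p_j; in particular, the prime ideals p_1, p_2, p_3, ... are pairwise distinct. -/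
/-- With the notation and hypotheses of the construction (with `Msub 0 = 0`), for all
`1 ≤ i < j` one has `p i ⊈ p j`; in particular the primes `p 1, p 2, …` are
pairwise distinct. -/
theorem p_not_le_p_of_construction
    {R : Type*} [CommRing R] [IsNoetherianRing R]
    {M : Type*} [AddCommGroup M] [Module R M]
    (x : ℕ → M) (p q : ℕ → Ideal R) (Msub : ℕ → Submodule R M)
    (hM0 : Msub 0 = ⊥)
    (hp_supp : ∀ i : ℕ, ∃ h : (p (i + 1)).IsPrime,
      (⟨p (i + 1), h⟩ : PrimeSpectrum R) ∈ Module.support R (M ⧸ Msub i))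
    (hp_nass : ∀ i : ℕ, p (i + 1) ∉ associatedPrimes R (M ⧸ Msub i))
    (hp_max : ∀ i : ℕ, ∀ J : Ideal R,
      (∃ hJ : J.IsPrime, (⟨J, hJ⟩ : PrimeSpectrum R) ∈ Module.support R (M ⧸ Msub i)) →
      J ∉ associatedPrimes R (M ⧸ Msub i) → p (i + 1) ≤ J → J = p (i + 1))
    (hq_ass : ∀ i : ℕ, q (i + 1) ∈ associatedPrimes R (M ⧸ Msub i))
    (hq_eq : ∀ i : ℕ, ∀ r : R, r ∈ q (i + 1) ↔ r • x (i + 1) ∈ Msub i)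
    (hqp : ∀ i : ℕ, q (i + 1) ≤ p (i + 1))
    (hMsucc : ∀ i : ℕ, Msub (i + 1) =
      Msub i ⊔ Submodule.map (LinearMap.toSpanSingleton R M (x (i + 1))) (p (i + 1)))
    :
    (∀ i j : ℕ, 1 ≤ i → i < j → ¬ p i ≤ p j) ∧
    (∀ i j : ℕ, 1 ≤ i → 1 ≤ j → i ≠ j → p i ≠ p j) := by
  have hq_prime : ∀ i : ℕ, (q (i + 1)).IsPrime := fun i => (hq_ass i).isPrime
  have hmono : ∀ k : ℕ, Msub k ≤ Msub (k + 1) := fun k => by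
    rw [hMsucc]; exact le_sup_left
  have hmono' : Monotone Msub := monotone_nat_of_le_succ hmono
  -- the annihilator of the coset `x (i+1) + Msub (i+1)` is exactly `p (i+1)`
  have hann : ∀ i : ℕ, ∀ r : R, r • x (i + 1) ∈ Msub (i + 1) ↔ r ∈ p (i + 1) := by
    intro i r
    rw [hMsucc]
    constructor
    · intro h
      rcases Submodule.mem_sup.mp h with ⟨m, hm, z, hz, hmz⟩
      rcases Submodule.mem_map.mp hz with ⟨a, ha, rfl⟩
      rw [LinearMap.toSpanSingleton_apply] at hmz
      have hsub : (r - a) • x (i + 1) ∈ Msub i := by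
        rw [sub_smul]
        have : r • x (i + 1) - a • x (i + 1) = m := by
          rw [← hmz]; abel
        rw [this]; exact hm
      have : r - a ∈ p (i + 1) := hqp i ((hq_eq i (r - a)).mpr hsub)
      have := add_mem this ha
      simpa using this
    · intro h
      exact Submodule.mem_sup_right ⟨r, h, by rw [LinearMap.toSpanSingleton_apply]⟩
  have hp_ass_succ : ∀ i : ℕ, p (i + 1) ∈ associatedPrimes R (M ⧸ Msub (i + 1)) := by
    intro i
    obtain ⟨hprime, _⟩ := hp_supp i
    refine isAssociatedPrime_iff.mpr ⟨hprime, Submodule.Quotient.mk (x (i + 1)), ?_⟩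
    ext r
    rw [Submodule.mem_colon_singleton, Submodule.mem_bot, ← Submodule.Quotient.mk_smul,
      Submodule.Quotient.mk_eq_zero]
    exact (hann i r).symm
  -- key step: an associated prime of `M ⧸ Msub k` either survives or is contained in `q (k+1)`
  have hstep : ∀ k : ℕ, ∀ P : Ideal R, P ∈ associatedPrimes R (M ⧸ Msub k) →
      P ∈ associatedPrimes R (M ⧸ Msub (k + 1)) ∨ P ≤ q (k + 1) := by
    intro k P hP
    obtain ⟨hPprime, y', hy⟩ := isAssociatedPrime_iff.mp hP
    obtain ⟨y, rfl⟩ := Submodule.Quotient.mk_surjective _ y'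
    have hyP : ∀ r : R, r ∈ P ↔ r • y ∈ Msub k := by
      intro r
      rw [hy, Submodule.mem_colon_singleton, Submodule.mem_bot, ← Submodule.Quotient.mk_smul,
        Submodule.Quotient.mk_eq_zero]
    by_cases hcase : ∀ r : R, r • y ∈ Msub (k + 1) → r ∈ P
    · left
      refine isAssociatedPrime_iff.mpr ⟨hPprime, Submodule.Quotient.mk y, ?_⟩
      ext r
      rw [Submodule.mem_colon_singleton, Submodule.mem_bot, ← Submodule.Quotient.mk_smul,
        Submodule.Quotient.mk_eq_zero]
      exact ⟨fun h => hmono k ((hyP r).mp h), fun h => hcase r h⟩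
    · right
      push_neg at hcase
      obtain ⟨r, hry, hrP⟩ := hcase
      rw [hMsucc] at hry
      rcases Submodule.mem_sup.mp hry with ⟨m, hm, z, hz, hmz⟩
      rcases Submodule.mem_map.mp hz with ⟨a, ha, rfl⟩
      rw [LinearMap.toSpanSingleton_apply] at hmz
      have haq : a ∉ q (k + 1) := by
        intro haq
        have h1 : a • x (k + 1) ∈ Msub k := (hq_eq k a).mp haq
        have : r • y ∈ Msub k := by rw [← hmz]; exact add_mem hm h1
        exact hrP ((hyP r).mpr this)
      intro s hs
      have h1 : s • (r • y) ∈ Msub k := by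
        rw [smul_comm]
        exact (Msub k).smul_mem r ((hyP s).mp hs)
      have h2 : (s * a) • x (k + 1) ∈ Msub k := by
        have heq : (s * a) • x (k + 1) = s • (r • y) - s • m := by
          rw [mul_smul, ← smul_sub]
          congr 1
          rw [← hmz]; abel
        rw [heq]
        exact sub_mem h1 ((Msub k).smul_mem s hm)
      have hsa : s * a ∈ q (k + 1) := (hq_eq k (s * a)).mpr h2
      exact ((hq_prime k).mem_or_mem hsa).resolve_right haq
  have hpush : ∀ i k : ℕ, p i ∈ associatedPrimes R (M ⧸ Msub k) →
      p i ∈ associatedPrimes R (M ⧸ Msub (k + 1)) ∨ p i ≤ p (k + 1) := by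
    intro i k h
    exact (hstep k (p i) h).imp id fun h' => h'.trans (hqp k)
  -- support monotonicity
  have hsupp_mono : ∀ (a b : ℕ), a ≤ b → ∀ (P : PrimeSpectrum R),
      P ∈ Module.support R (M ⧸ Msub b) → P ∈ Module.support R (M ⧸ Msub a) := by
    intro a b hab P hP
    rw [Module.mem_support_iff'] at hP ⊢
    obtain ⟨m', hm'⟩ := hP
    obtain ⟨m, rfl⟩ := Submodule.Quotient.mk_surjective _ m'
    refine ⟨Submodule.Quotient.mk m, fun r hr hzero => hm' r hr ?_⟩
    rw [← Submodule.Quotient.mk_smul, Submodule.Quotient.mk_eq_zero] at hzero ⊢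
    exact hmono' hab hzero
  -- main claim, by strong induction on `j`
  have main : ∀ j i : ℕ, 1 ≤ i → i < j → ¬ p i ≤ p j := by
    intro j
    induction j using Nat.strong_induction_on with
    | _ j IH =>
      intro i hi hij hle
      obtain ⟨i', rfl⟩ : ∃ i', i = i' + 1 := ⟨i - 1, by omega⟩
      obtain ⟨j', rfl⟩ : ∃ j', j = j' + 1 := ⟨j - 1, by omega⟩
      obtain ⟨hpjprime, hpjsupp⟩ := hp_supp j'
      have hsupp_i : (⟨p (j' + 1), hpjprime⟩ : PrimeSpectrum R) ∈
          Module.support R (M ⧸ Msub i') := hsupp_mono i' j' (by omega) _ hpjsupp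
      -- base case: `p (j'+1)` is associated to `M ⧸ Msub (i'+1)`
      have hbase : p (j' + 1) ∈ associatedPrimes R (M ⧸ Msub (i' + 1)) := by
        by_cases hA : p (j' + 1) ∈ associatedPrimes R (M ⧸ Msub i')
        · rcases hpush (j' + 1) i' hA with h | h
          · exact h
          · have : p (j' + 1) = p (i' + 1) := le_antisymm h hle
            rw [this]; exact hp_ass_succ i'
        · have : p (j' + 1) = p (i' + 1) := hp_max i' _ ⟨hpjprime, hsupp_i⟩ hA hle
          rw [this]; exact hp_ass_succ i'
      -- propagation up to `Msub j'`
      have hprop : ∀ d : ℕ, i' + 1 + d ≤ j' →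
          p (j' + 1) ∈ associatedPrimes R (M ⧸ Msub (i' + 1 + d)) := by
        intro d
        induction d with
        | zero => intro _; exact hbase
        | succ n IHn =>
          intro hd
          have hn := IHn (by omega)
          rcases hpush (j' + 1) (i' + 1 + n) hn with hgood | hbad
          · have he : i' + 1 + (n + 1) = (i' + 1 + n) + 1 := by omega
            rw [he]; exact hgood
          · exact absurd (hle.trans hbad)
              (IH (i' + 1 + n + 1) (by omega) (i' + 1) hi (by omega))
      have hfin : p (j' + 1) ∈ associatedPrimes R (M ⧸ Msub j') := by
        have he : i' + 1 + (j' - (i' + 1)) = j' := by omega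
        have := hprop (j' - (i' + 1)) (by omega)
        rwa [he] at this
      exact hp_nass j' hfin
  refine ⟨fun i j hi hij => main j i hi hij, fun i j hi hj hij hpp => ?_⟩
  rcases Nat.lt_or_ge i j with h | h
  · exact main j i hi h (le_of_eq hpp)
  · exact main i j hj (by omega) (le_of_eq hpp.symm)
end

section
/- Let R be a commutative Noetherian ring and M an R-module. Suppose given, for every integer i ≥ 1, an element x_i ∈ M, prime ideals p_i and q_i of R, and a submodule M_i of M, with M_0 = 0, such that for every i ≥ 1: (a) p_i is a maximal element, under inclusion, of the set Supp_R(M/M_{i-1}) \ Ass_R(M/M_{i-1}); (b) q_i ∈ Ass_R(M/M_{i-1}), q_i = (0 :_R x_i + M_{i-1}), and q_i ⊆ p_i; (c) M_i = M_{i-1} + p_i·x_i. Let M_∞ = ⋃_{i≥1} M_i be the union of the ascending chain M_1 ⊆ M_2 ⊆ M_3 ⊆ ⋯ of submodules. Then p_i = (0 :_R x_i + M_∞) for all i ≥ 1; in particular, Ass_R(M/M_∞) contains the pairwise distinct prime ideals p_1, p_2, p_3, ..., and hence Ass_R(M/M_∞) is an infinite set. -/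
/-- With the notation and hypotheses of the construction, let `Minf = ⋃ i, Msub i` be the
union of the ascending chain. Then `p i = (0 :_R x i + Minf)` for all `i ≥ 1`; in
particular `Ass_R(M/Minf)` contains the pairwise distinct primes `p 1, p 2, …`, and is
therefore infinite. -/
theorem associatedPrimes_union_infinite_of_construction
    {R : Type*} [CommRing R] [IsNoetherianRing R]
    {M : Type*} [AddCommGroup M] [Module R M]
    (x : ℕ → M) (p q : ℕ → Ideal R) (Msub : ℕ → Submodule R M)
    (hM0 : Msub 0 = ⊥)
    (hp_supp : ∀ i : ℕ, ∃ h : (p (i + 1)).IsPrime,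
      (⟨p (i + 1), h⟩ : PrimeSpectrum R) ∈ Module.support R (M ⧸ Msub i))
    (hp_nass : ∀ i : ℕ, p (i + 1) ∉ associatedPrimes R (M ⧸ Msub i))
    (hp_max : ∀ i : ℕ, ∀ J : Ideal R,
      (∃ hJ : J.IsPrime, (⟨J, hJ⟩ : PrimeSpectrum R) ∈ Module.support R (M ⧸ Msub i)) →
      J ∉ associatedPrimes R (M ⧸ Msub i) → p (i + 1) ≤ J → J = p (i + 1))
    (hq_ass : ∀ i : ℕ, q (i + 1) ∈ associatedPrimes R (M ⧸ Msub i))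
    (hq_eq : ∀ i : ℕ, ∀ r : R, r ∈ q (i + 1) ↔ r • x (i + 1) ∈ Msub i)
    (hqp : ∀ i : ℕ, q (i + 1) ≤ p (i + 1))
    (hMsucc : ∀ i : ℕ, Msub (i + 1) =
      Msub i ⊔ Submodule.map (LinearMap.toSpanSingleton R M (x (i + 1))) (p (i + 1)))
    (Minf : Submodule R M)
    (hMinf : Minf = ⨆ i : ℕ, Msub i) :
    (∀ i : ℕ, 1 ≤ i → ∀ r : R, r ∈ p i ↔ r • x i ∈ Minf) ∧
    (∀ i : ℕ, 1 ≤ i → p i ∈ associatedPrimes R (M ⧸ Minf)) ∧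
    (∀ i j : ℕ, 1 ≤ i → 1 ≤ j → i ≠ j → p i ≠ p j) ∧
    (associatedPrimes R (M ⧸ Minf)).Infinite := by
  have hmono : Monotone Msub := monotone_nat_of_le_succ fun n => by
    rw [hMsucc n]; exact le_sup_left
  have hq_prime : ∀ i, (q (i + 1)).IsPrime := fun i => (hq_ass i).1
  have hp_prime : ∀ i, (p (i + 1)).IsPrime := fun i => (hp_supp i).choose
  -- translation between annihilators of cosets and colon conditions
  have mem_ann_iff : ∀ (N : Submodule R M) (y : M) (r : R),
      r ∈ (Submodule.span R {(Submodule.Quotient.mk y : M ⧸ N)}).annihilator ↔ r • y ∈ N := by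
    intro N y r
    rw [Submodule.mem_annihilator_span_singleton, ← Submodule.Quotient.mk_smul,
      Submodule.Quotient.mk_eq_zero]
  have ass_of_colon : ∀ (N : Submodule R M) (y : M) (P : Ideal R), P.IsPrime →
      (∀ r, r ∈ P ↔ r • y ∈ N) → P ∈ associatedPrimes R (M ⧸ N) := by
    intro N y P hP hcol
    exact isAssociatedPrime_iff.2 ⟨hP, Submodule.Quotient.mk y, by
      ext r; rw [Submodule.mem_colon_singleton, Submodule.mem_bot, ← Submodule.Quotient.mk_smul,
        Submodule.Quotient.mk_eq_zero]; exact hcol r⟩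
  -- survival of a colon ideal through one step of the construction
  have survive : ∀ (l : ℕ) (y : M) (P : Ideal R), P.IsPrime → P ≠ q (l + 1) →
      (∀ r, r ∈ P ↔ r • y ∈ Msub l) → ∀ r, r ∈ P ↔ r • y ∈ Msub (l + 1) := by
    intro l y P hP hne hcol r
    constructor
    · intro hr
      exact hmono (Nat.le_succ l) ((hcol r).1 hr)
    · intro hr
      rw [hMsucc l] at hr
      rcases Submodule.mem_sup.1 hr with ⟨m, hm, z, hz, hsum⟩
      rcases Submodule.mem_map.1 hz with ⟨a, ha, rfl⟩
      rw [LinearMap.toSpanSingleton_apply] at hsum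
      by_cases haq : a ∈ q (l + 1)
      · apply (hcol r).2
        rw [← hsum]
        exact Submodule.add_mem _ hm ((hq_eq l a).1 haq)
      · by_contra hrP
        apply hne
        have key : ∀ s : R, (s * r) • y = s • m + (s * a) • x (l + 1) := by
          intro s
          rw [mul_smul, ← hsum, smul_add, mul_smul]
        apply le_antisymm
        · intro s hs
          have h1 : (s * r) • y ∈ Msub l := (hcol _).1 (Ideal.mul_mem_right r _ hs)
          have h2 : (s * a) • x (l + 1) ∈ Msub l := by
            have : (s * a) • x (l + 1) = (s * r) • y - s • m := by rw [key s]; abel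
            rw [this]
            exact Submodule.sub_mem _ h1 (Submodule.smul_mem _ _ hm)
          have := (hq_eq l _).2 h2
          exact ((hq_prime l).mem_or_mem this).resolve_right haq
        · intro s hs
          have h2 : (s * a) • x (l + 1) ∈ Msub l :=
            (hq_eq l _).1 (Ideal.mul_mem_right a _ hs)
          have h1 : (s * r) • y ∈ Msub l := by
            rw [key s]
            exact Submodule.add_mem _ (Submodule.smul_mem _ _ hm) h2
          have := (hcol _).2 h1
          exact (hP.mem_or_mem this).resolve_right hrP
  -- survival of associated primes
  have ass_survive : ∀ (l : ℕ) (P : Ideal R), P ∈ associatedPrimes R (M ⧸ Msub l) →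
      P ≠ q (l + 1) → P ∈ associatedPrimes R (M ⧸ Msub (l + 1)) := by
    intro l P hP hne
    obtain ⟨hPp, z, hz⟩ := isAssociatedPrime_iff.1 hP
    obtain ⟨y, rfl⟩ := Submodule.Quotient.mk_surjective _ z
    have hcol : ∀ r, r ∈ P ↔ r • y ∈ Msub l := by
      intro r
      rw [hz]
      rw [Submodule.mem_colon_singleton, Submodule.mem_bot, ← Submodule.Quotient.mk_smul,
        Submodule.Quotient.mk_eq_zero]
    exact ass_of_colon _ y P hPp (survive l y P hPp hne hcol)
  -- an associated prime can only disappear by being some `q l`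
  have die : ∀ (a b : ℕ), a ≤ b → ∀ P : Ideal R, P ∈ associatedPrimes R (M ⧸ Msub a) →
      P ∉ associatedPrimes R (M ⧸ Msub b) → ∃ l, a ≤ l ∧ l < b ∧ P = q (l + 1) := by
    intro a b hab
    induction b, hab using Nat.le_induction with
    | base => intro P hin hout; exact absurd hin hout
    | succ n hn IH =>
      intro P hin hout
      by_cases hPn : P ∈ associatedPrimes R (M ⧸ Msub n)
      · by_cases hq : P = q (n + 1)
        · exact ⟨n, hn, by omega, hq⟩
        · exact absurd (ass_survive n P hPn hq) hout
      · obtain ⟨l, h1, h2, h3⟩ := IH P hin hPn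
        exact ⟨l, h1, by omega, h3⟩
  -- monotonicity of supports
  have supp_mono : ∀ (a b : ℕ), a ≤ b →
      Module.support R (M ⧸ Msub b) ⊆ Module.support R (M ⧸ Msub a) := by
    intro a b hab
    refine Module.support_subset_of_surjective
      (Submodule.mapQ (Msub a) (Msub b) LinearMap.id (by simpa using hmono hab)) ?_
    intro z
    obtain ⟨y, rfl⟩ := Submodule.Quotient.mk_surjective _ z
    exact ⟨Submodule.Quotient.mk y, Submodule.mapQ_apply _ _ _ y⟩
  have hqlt : ∀ l, q (l + 1) < p (l + 1) := fun l =>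
    lt_of_le_of_ne (hqp l) fun h => hp_nass l (h ▸ hq_ass l)
  -- no `p k` strictly above an earlier `p i`
  have noLt : ∀ k : ℕ, ∀ i < k, ¬p (i + 1) < p (k + 1) := by
    intro k
    induction k using Nat.strong_induction_on with
    | _ k IH =>
      intro i hik hlt
      obtain ⟨hpk, hks⟩ := hp_supp k
      have hsupp_i : (⟨p (k + 1), hpk⟩ : PrimeSpectrum R) ∈ Module.support R (M ⧸ Msub i) :=
        supp_mono i k (le_of_lt hik) hks
      have hass_i : p (k + 1) ∈ associatedPrimes R (M ⧸ Msub i) := by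
        by_contra h
        exact hlt.ne' (hp_max i _ ⟨hpk, hsupp_i⟩ h hlt.le)
      obtain ⟨l, hil, hlk, hPq⟩ := die i k (le_of_lt hik) _ hass_i (hp_nass k)
      rw [hPq] at hlt
      have hltl : p (i + 1) < p (l + 1) := hlt.trans (hqlt l)
      rcases hil.lt_or_eq with h | h
      · exact IH l hlk i h hltl
      · subst h; exact lt_irrefl _ hltl
  have hqne : ∀ i l : ℕ, i < l → p (i + 1) ≠ q (l + 1) := by
    intro i l hil h
    exact noLt l i hil (by rw [h]; exact hqlt l)
  -- the main colon computation
  have colonE : ∀ i k : ℕ, i + 1 ≤ k → ∀ r, r ∈ p (i + 1) ↔ r • x (i + 1) ∈ Msub k := by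
    intro i k hk
    induction k, hk using Nat.le_induction with
    | base =>
      intro r
      constructor
      · intro hr
        rw [hMsucc i]
        exact Submodule.mem_sup_right
          (Submodule.mem_map.2 ⟨r, hr, LinearMap.toSpanSingleton_apply R M _ r⟩)
      · intro hr
        rw [hMsucc i] at hr
        rcases Submodule.mem_sup.1 hr with ⟨m, hm, z, hz, hsum⟩
        rcases Submodule.mem_map.1 hz with ⟨a, ha, rfl⟩
        rw [LinearMap.toSpanSingleton_apply] at hsum
        have hsub : (r - a) • x (i + 1) ∈ Msub i := by
          have : (r - a) • x (i + 1) = m := by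
            rw [sub_smul, ← hsum]; abel
          rw [this]; exact hm
        have : r - a ∈ p (i + 1) := hqp i ((hq_eq i _).2 hsub)
        simpa using Submodule.add_mem _ this ha
    | succ k hk IH =>
      exact survive k (x (i + 1)) (p (i + 1)) (hp_prime i) (hqne i k (by omega)) IH
  -- colon with the union
  have colonInf : ∀ i : ℕ, ∀ r, r ∈ p (i + 1) ↔ r • x (i + 1) ∈ Minf := by
    intro i r
    rw [hMinf]
    constructor
    · intro hr
      exact le_iSup Msub (i + 1) ((colonE i (i + 1) le_rfl r).1 hr)
    · intro hr
      rcases (Submodule.mem_iSup_of_directed Msub hmono.directed_le).1 hr with ⟨k, hk⟩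
      have : r • x (i + 1) ∈ Msub (max k (i + 1)) := hmono (le_max_left _ _) hk
      exact (colonE i _ (le_max_right _ _) r).2 this
  have g1 : ∀ i : ℕ, 1 ≤ i → ∀ r : R, r ∈ p i ↔ r • x i ∈ Minf := by
    intro i hi
    cases i with
    | zero => omega
    | succ j => exact colonInf j
  have g2 : ∀ i : ℕ, 1 ≤ i → p i ∈ associatedPrimes R (M ⧸ Minf) := by
    intro i hi
    cases i with
    | zero => omega
    | succ j => exact ass_of_colon Minf (x (j + 1)) _ (hp_prime j) (colonInf j)
  have key : ∀ a b : ℕ, a < b → p (a + 1) ≠ p (b + 1) := by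
    intro a b hab h
    exact hp_nass b (h ▸ ass_of_colon (Msub b) (x (a + 1)) _ (hp_prime a) (colonE a b (by omega)))
  have g3 : ∀ i j : ℕ, 1 ≤ i → 1 ≤ j → i ≠ j → p i ≠ p j := by
    intro i j hi hj hij
    cases i with
    | zero => omega
    | succ a =>
      cases j with
      | zero => omega
      | succ b =>
        rcases lt_or_gt_of_ne (show a ≠ b by omega) with h | h
        · exact key a b h
        · exact (key b a h).symm
  refine ⟨g1, g2, g3, ?_⟩
  exact Set.infinite_of_injective_forall_mem (f := fun n : ℕ => p (n + 1))
    (fun a b hab => by by_contra h; exact g3 (a + 1) (b + 1) (by omega) (by omega) (by omega) hab)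
    (fun n => g2 (n + 1) (by omega))
end

section
/- Let R be a commutative Noetherian ring and M a weakly Laskerian R-module (i.e., Ass_R(M/L) is finite for every submodule L of M). Then there is no sequence, indexed by integers i ≥ 1, of elements x_i ∈ M, prime ideals p_i and q_i of R, and submodules M_i of M with M_0 = 0, satisfying for every i ≥ 1: (a) p_i is a maximal element, under inclusion, of the set Supp_R(M/M_{i-1}) \ Ass_R(M/M_{i-1}), and in particular this set is nonempty; (b) q_i ∈ Ass_R(M/M_{i-1}), q_i = (0 :_R x_i + M_{i-1}), and q_i ⊆ p_i; (c) M_i = M_{i-1} + p_i·x_i. Consequently, any process of constructing such data starting from M_0 = 0 must terminate at some step i with Supp_R(M/M_{i-1}) = Ass_R(M/M_{i-1}). -/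
/-- Let `R` be a commutative Noetherian ring and `M` a weakly Laskerian `R`-module
(i.e. `Ass_R(M/L)` is finite for every submodule `L` of `M`). Then there is no sequence,
indexed by `i ≥ 1`, of elements `x i ∈ M`, prime ideals `p i`, `q i`, and submodules
`Msub i`, with `Msub 0 = 0`, such that for every `i ≥ 1`:
(a) `p i` is a maximal element, under inclusion, of `Supp_R(M/Msub (i-1)) \ Ass_R(M/Msub (i-1))`;
(b) `q i ∈ Ass_R(M/Msub (i-1))`, `q i = (0 :_R x i + Msub (i-1))`, and `q i ⊆ p i`;
(c) `Msub i = Msub (i-1) + (p i)·(x i)`.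
Consequently, any such construction process starting from `Msub 0 = 0` must terminate at
some step with `Supp_R(M/Msub (i-1)) = Ass_R(M/Msub (i-1))`. -/
theorem no_infinite_construction_of_weaklyLaskerian
    {R : Type*} [CommRing R] [IsNoetherianRing R]
    {M : Type*} [AddCommGroup M] [Module R M]
    (hwl : ∀ L : Submodule R M, (associatedPrimes R (M ⧸ L)).Finite) :
    ¬ ∃ (x : ℕ → M) (p q : ℕ → Ideal R) (Msub : ℕ → Submodule R M),
      Msub 0 = ⊥ ∧
      (∀ i : ℕ, ∃ h : (p (i + 1)).IsPrime,
        (⟨p (i + 1), h⟩ : PrimeSpectrum R) ∈ Module.support R (M ⧸ Msub i)) ∧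
      (∀ i : ℕ, p (i + 1) ∉ associatedPrimes R (M ⧸ Msub i)) ∧
      (∀ i : ℕ, ∀ J : Ideal R,
        (∃ hJ : J.IsPrime, (⟨J, hJ⟩ : PrimeSpectrum R) ∈ Module.support R (M ⧸ Msub i)) →
        J ∉ associatedPrimes R (M ⧸ Msub i) → p (i + 1) ≤ J → J = p (i + 1)) ∧
      (∀ i : ℕ, q (i + 1) ∈ associatedPrimes R (M ⧸ Msub i)) ∧
      (∀ i : ℕ, ∀ r : R, r ∈ q (i + 1) ↔ r • x (i + 1) ∈ Msub i) ∧
      (∀ i : ℕ, q (i + 1) ≤ p (i + 1)) ∧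
      (∀ i : ℕ, Msub (i + 1) =
        Msub i ⊔ Submodule.map (LinearMap.toSpanSingleton R M (x (i + 1))) (p (i + 1))) := by
  rintro ⟨x, p, q, Msub, h0, hsupp, hnass, hmax, hqass, hqann, hqp, hstep⟩
  have hpprime : ∀ i, (p (i + 1)).IsPrime := fun i => (hsupp i).choose
  have hqprime : ∀ i, (q (i + 1)).IsPrime := fun i => (hqass i).1
  have hmono : Monotone Msub := by
    apply monotone_nat_of_le_succ
    intro i
    rw [hstep i]
    exact le_sup_left
  -- membership description of `Msub (i+1)`
  have hmem : ∀ (i : ℕ) (z : M), z ∈ Msub (i + 1) ↔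
      ∃ m ∈ Msub i, ∃ a ∈ p (i + 1), m + a • x (i + 1) = z := by
    intro i z
    rw [hstep i, Submodule.mem_sup]
    constructor
    · rintro ⟨m, hm, b, hb, hz⟩
      obtain ⟨a, ha, rfl⟩ := Submodule.mem_map.mp hb
      refine ⟨m, hm, a, ha, ?_⟩
      simpa using hz
    · rintro ⟨m, hm, a, ha, hz⟩
      exact ⟨m, hm, a • x (i + 1), Submodule.mem_map.mpr ⟨a, ha, by simp⟩, hz⟩
  -- a prime which is the annihilator of a coset is an associated prime of the quotient
  have mkAss : ∀ (N : Submodule R M) (P : Ideal R), P.IsPrime → ∀ y : M,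
      (∀ t : R, t • y ∈ N ↔ t ∈ P) → P ∈ associatedPrimes R (M ⧸ N) := by
    intro N P hP y hy
    refine isAssociatedPrime_iff.mpr ⟨hP, Submodule.Quotient.mk y, ?_⟩
    ext r
    rw [Submodule.mem_colon_singleton, Submodule.mem_bot, ← Submodule.Quotient.mk_smul,
      Submodule.Quotient.mk_eq_zero]
    exact (hy r).symm
  -- conversely, an associated prime of the quotient is such an annihilator
  have exAss : ∀ (N : Submodule R M) (P : Ideal R), P ∈ associatedPrimes R (M ⧸ N) →
      ∃ y : M, ∀ t : R, t • y ∈ N ↔ t ∈ P := by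
    intro N P hP
    obtain ⟨hPp, z, hz⟩ := isAssociatedPrime_iff.mp hP
    obtain ⟨y, rfl⟩ := Submodule.Quotient.mk_surjective N z
    refine ⟨y, fun t => ?_⟩
    rw [hz, Submodule.mem_colon_singleton, Submodule.mem_bot, ← Submodule.Quotient.mk_smul,
      Submodule.Quotient.mk_eq_zero]
  -- supports of the quotients decrease along the chain
  have hsmono : ∀ i j, i ≤ j →
      Module.support R (M ⧸ Msub j) ⊆ Module.support R (M ⧸ Msub i) := by
    intro i j hij
    refine Module.support_subset_of_surjective
      (Submodule.mapQ (Msub i) (Msub j) LinearMap.id (fun m hm => hmono hij hm)) ?_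
    intro z
    obtain ⟨y, rfl⟩ := Submodule.Quotient.mk_surjective _ z
    exact ⟨Submodule.Quotient.mk y, by simp [Submodule.mapQ_apply]⟩
  -- one-step persistence of coset annihilators
  have persist : ∀ (P : Ideal R), P.IsPrime → ∀ (y : M) (k : ℕ),
      (∀ t : R, t • y ∈ Msub k ↔ t ∈ P) →
      (∀ t : R, t • y ∈ Msub (k + 1) ↔ t ∈ P) ∨ P = q (k + 1) := by
    intro P hP y k hy
    by_cases hPq : P = q (k + 1)
    · exact Or.inr hPq
    left
    intro t
    constructor
    · intro ht
      obtain ⟨m, hm, a, ha, heq⟩ := (hmem k _).mp ht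
      by_cases haq : a ∈ q (k + 1)
      · have hax : a • x (k + 1) ∈ Msub k := (hqann k a).mp haq
        have hty : t • y ∈ Msub k := by
          rw [← heq]
          exact Submodule.add_mem _ hm hax
        exact (hy t).mp hty
      · -- `a ∉ q (k+1)` forces `P ≤ q (k+1)`
        have hPle : P ≤ q (k + 1) := by
          intro u hu
          have huy : u • y ∈ Msub k := (hy u).mpr hu
          have h1 : u • (t • y) ∈ Msub k := by
            rw [smul_comm]
            exact Submodule.smul_mem _ t huy
          have h2 : (u * a) • x (k + 1) ∈ Msub k := by
            have e : (u * a) • x (k + 1) = u • (t • y) - u • m := by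
              rw [← heq]
              module
            rw [e]
            exact Submodule.sub_mem _ h1 (Submodule.smul_mem _ u hm)
          have := (hqann k (u * a)).mpr h2
          exact ((hqprime k).mem_or_mem this).resolve_right haq
        obtain ⟨s, hsq, hsP⟩ := SetLike.exists_of_lt (lt_of_le_of_ne hPle hPq)
        have hsx : s • x (k + 1) ∈ Msub k := (hqann k s).mp hsq
        have h3 : (s * t) • y ∈ Msub k := by
          have e : (s * t) • y = s • m + a • (s • x (k + 1)) := by
            rw [mul_smul, ← heq]
            module
          rw [e]
          exact Submodule.add_mem _ (Submodule.smul_mem _ s hm)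
            (Submodule.smul_mem _ a hsx)
        have := (hy (s * t)).mp h3
        exact (hP.mem_or_mem this).resolve_left hsP
    · intro ht
      exact hmono (Nat.le_succ k) ((hy t).mpr ht)
  -- iterated persistence
  have persistN : ∀ (P : Ideal R), P.IsPrime → ∀ (y : M) (i j : ℕ), i ≤ j →
      (∀ t : R, t • y ∈ Msub i ↔ t ∈ P) →
      (∀ t : R, t • y ∈ Msub j ↔ t ∈ P) ∨ ∃ k, i ≤ k ∧ k < j ∧ P = q (k + 1) := by
    intro P hP y i j hij h0'
    induction j, hij using Nat.le_induction with
    | base => exact Or.inl h0'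
    | succ j hij IH =>
      rcases IH with h | ⟨k, h1, h2, h3⟩
      · rcases persist P hP y j h with h' | h'
        · exact Or.inl h'
        · exact Or.inr ⟨j, hij, by omega, h'⟩
      · exact Or.inr ⟨k, h1, by omega, h3⟩
  -- no strict inclusion `p (i+1) < p (i+g+1)`
  have NC : ∀ g i, ¬ (p (i + 1) < p (i + g + 1)) := by
    intro g
    induction g using Nat.strong_induction_on with
    | _ g IH =>
      intro i hlt
      rcases Nat.eq_zero_or_pos g with hg | hg
      · subst hg
        exact lt_irrefl _ hlt
      · obtain ⟨hP, hPs⟩ := hsupp (i + g)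
        have hPs' : (⟨p (i + g + 1), hP⟩ : PrimeSpectrum R) ∈
            Module.support R (M ⧸ Msub i) := hsmono i (i + g) (Nat.le_add_right _ _) hPs
        have hAss : p (i + g + 1) ∈ associatedPrimes R (M ⧸ Msub i) := by
          by_contra hn
          exact absurd (hmax i _ ⟨hP, hPs'⟩ hn (le_of_lt hlt)) hlt.ne'
        obtain ⟨y, hy⟩ := exAss _ _ hAss
        rcases persistN (p (i + g + 1)) hP y i (i + g) (Nat.le_add_right _ _) hy with
          hpers | ⟨k, hik, hki, hqk⟩
        · exact hnass (i + g) (mkAss _ _ hP y hpers)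
        · have h1 : p (i + g + 1) < p (k + 1) := by
            refine lt_of_le_of_ne (hqk.le.trans (hqp k)) ?_
            intro he
            exact hnass k (by rw [← he, hqk]; exact hqass k)
          rcases Nat.eq_or_lt_of_le hik with rfl | hik'
          · exact absurd (hlt.trans h1) (lt_irrefl _)
          · have h2 : p (i + 1) < p (i + (k - i) + 1) := by
              rw [Nat.add_sub_cancel' (le_of_lt hik')]
              exact hlt.trans h1
            exact IH (k - i) (by omega) i h2
  -- the annihilator of `x (i+1)` modulo `Msub (j+1)` is `p (i+1)` for all `j ≥ i`
  have Ann : ∀ i j, i ≤ j → ∀ t : R, t • x (i + 1) ∈ Msub (j + 1) ↔ t ∈ p (i + 1) := by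
    intro i j hij
    induction j, hij using Nat.le_induction with
    | base =>
      intro t
      constructor
      · intro ht
        obtain ⟨m, hm, a, ha, heq⟩ := (hmem i _).mp ht
        have e : (t - a) • x (i + 1) = m := by
          rw [sub_smul, ← heq]
          abel
        have h1 : t - a ∈ q (i + 1) := (hqann i (t - a)).mpr (by rw [e]; exact hm)
        have h2 : t - a ∈ p (i + 1) := hqp i h1
        simpa using Ideal.add_mem _ h2 ha
      · intro ht
        exact (hmem i _).mpr ⟨0, Submodule.zero_mem _, t, ht, by simp⟩
    | succ j hij IH =>
      intro t
      constructor
      · intro ht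
        obtain ⟨m, hm, a, ha, heq⟩ := (hmem (j + 1) _).mp ht
        by_cases haq : a ∈ q (j + 1 + 1)
        · have hax : a • x (j + 1 + 1) ∈ Msub (j + 1) := (hqann (j + 1) a).mp haq
          have hty : t • x (i + 1) ∈ Msub (j + 1) := by
            rw [← heq]
            exact Submodule.add_mem _ hm hax
          exact (IH t).mp hty
        · exfalso
          have hple : p (i + 1) ≤ q (j + 1 + 1) := by
            intro u hu
            have hux : u • x (i + 1) ∈ Msub (j + 1) := (IH u).mpr hu
            have h1 : u • (t • x (i + 1)) ∈ Msub (j + 1) := by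
              rw [smul_comm]
              exact Submodule.smul_mem _ t hux
            have h2 : (u * a) • x (j + 1 + 1) ∈ Msub (j + 1) := by
              have e : (u * a) • x (j + 1 + 1) = u • (t • x (i + 1)) - u • m := by
                rw [← heq]
                module
              rw [e]
              exact Submodule.sub_mem _ h1 (Submodule.smul_mem _ u hm)
            have := (hqann (j + 1) (u * a)).mpr h2
            exact ((hqprime (j + 1)).mem_or_mem this).resolve_right haq
          have hlt : p (i + 1) < p (j + 1 + 1) := by
            refine lt_of_le_of_ne (hple.trans (hqp (j + 1))) ?_
            intro he
            exact hnass (j + 1)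
              (he ▸ mkAss (Msub (j + 1)) (p (i + 1)) (hpprime i) (x (i + 1)) IH)
          have h2 : p (i + 1) < p (i + (j + 1 - i) + 1) := by
            rw [Nat.add_sub_cancel' (by omega : i ≤ j + 1)]
            exact hlt
          exact NC (j + 1 - i) i h2
      · intro ht
        refine hmono (by omega : i + 1 ≤ j + 1 + 1) ?_
        exact (hmem i _).mpr ⟨0, Submodule.zero_mem _, t, ht, by simp⟩
  -- the union of the chain
  set L : Submodule R M := ⨆ j, Msub j with hL
  have hdir : Directed (· ≤ ·) Msub := hmono.directed_le
  have hxL : ∀ i (t : R), t • x (i + 1) ∈ L ↔ t ∈ p (i + 1) := by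
    intro i t
    constructor
    · intro ht
      obtain ⟨j, hj⟩ := (Submodule.mem_iSup_of_directed Msub hdir).mp ht
      have h1 : t • x (i + 1) ∈ Msub (i + j + 1) := hmono (by omega) hj
      exact (Ann i (i + j) (by omega) t).mp h1
    · intro ht
      have h1 : t • x (i + 1) ∈ Msub (i + 1) :=
        (hmem i _).mpr ⟨0, Submodule.zero_mem _, t, ht, by simp⟩
      exact Submodule.mem_iSup_of_mem (i + 1) h1
  have hPA : ∀ i : ℕ, p (i + 1) ∈ associatedPrimes R (M ⧸ L) := fun i =>
    mkAss L (p (i + 1)) (hpprime i) (x (i + 1)) (hxL i)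
  have hne : ∀ i i', i < i' → p (i + 1) ≠ p (i' + 1) := by
    intro i i' hii he
    obtain ⟨k, rfl⟩ : ∃ k, i' = k + 1 := ⟨i' - 1, by omega⟩
    have h1 : p (i + 1) ∈ associatedPrimes R (M ⧸ Msub (k + 1)) :=
      mkAss _ _ (hpprime i) (x (i + 1)) (Ann i k (by omega))
    exact hnass (k + 1) (he ▸ h1)
  have hinj : Function.Injective fun i : ℕ => p (i + 1) := by
    intro i i' he
    by_contra hii
    rcases Nat.lt_or_ge i i' with h | h
    · exact hne i i' h he
    · exact hne i' i (by omega) he.symm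
  exact (hwl L).not_infinite (Set.infinite_of_injective_forall_mem hinj hPA)
end
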